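/- arXiv:2511.09763 — 5 statements merged into one kernel-verified Lean document; each statement's English description precedes it below -/
import Mathlib

section
/- Let D be a probability distribution on a measurable space X, let k ≥ 1 be an integer, and on some probability space let x_1,…,x_k be i.i.d. random variables each with law D. Let e be any event (possibly correlated with (x_1,…,x_k)) with Pr[e] = δ for some δ ∈ (0,1]. Let D_e be the probability measure on X defined by D_e(A) := E[(1/k)·Σ_{i=1}^k 1{x_i ∈ A} | e] for measurable A (the law of a uniformly random element among x_1,…,x_k, conditioned on e). Then d_TV(D, D_e) ≤ √(ln(1/δ)/(2k)). -/
/-!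
Put `S := ∑ᵢ (1_A(xᵢ) - D(A))`, so that `D(A) - D_e(A) = -E[S | e] / k`. By Hoeffding's lemma
and independence, `S` is sub-Gaussian with variance proxy `k/4` under `P`. Conditioning on an
event of probability `δ` inflates moment generating functions by at most `1/δ`, so Jensen's
inequality gives `t E[S | e] ≤ k t² / 8 + log (1/δ)` for every `t > 0`; optimizing in `t`
yields `|E[S | e]| ≤ √(k log (1/δ) / 2)`.
-/

open MeasureTheory ProbabilityTheory Real
open scoped ENNReal NNReal

lemma le_sqrt_of_forall_mul_le {a c L : ℝ} (hc : 0 ≤ c) (hL : 0 ≤ L)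
    (h : ∀ t > 0, a * t ≤ c * t ^ 2 / 2 + L) : a ≤ √(2 * c * L) := by
  rcases le_or_gt a 0 with ha | ha
  · exact ha.trans (sqrt_nonneg _)
  rcases hc.eq_or_lt with rfl | hc
  · have := h ((L + 1) / a) (by positivity)
    rw [mul_div_cancel₀ _ ha.ne'] at this
    linarith
  · refine le_sqrt_of_sq_le ?_
    have := h (a / c) (by positivity)
    field_simp at this
    nlinarith

section Conditioning

variable {Ω : Type*} [MeasurableSpace Ω] {μ : Measure Ω} {s : Set Ω}

lemma exp_integral_le_integral_exp [IsProbabilityMeasure μ] {f : Ω → ℝ} (hf : Integrable f μ)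
    (hef : Integrable (fun ω ↦ exp (f ω)) μ) : exp (∫ ω, f ω ∂μ) ≤ ∫ ω, exp (f ω) ∂μ :=
  convexOn_exp.map_integral_le continuous_exp.continuousOn isClosed_univ (by simp) hf hef

lemma MeasureTheory.Integrable.cond {f : Ω → ℝ} (hf : Integrable f μ) (hμs : μ s ≠ 0) :
    Integrable f μ[|s] :=
  hf.restrict.smul_measure (ENNReal.inv_ne_top.2 hμs)

lemma integral_cond_le_inv_mul_integral {f : Ω → ℝ} (hf : 0 ≤ f) (hfi : Integrable f μ) :
    ∫ ω, f ω ∂μ[|s] ≤ (μ.real s)⁻¹ * ∫ ω, f ω ∂μ := by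
  rw [ProbabilityTheory.cond, integral_smul_measure, ENNReal.toReal_inv, smul_eq_mul]
  exact mul_le_mul_of_nonneg_left (setIntegral_le_integral hfi (.of_forall hf)) (by positivity)

namespace ProbabilityTheory.HasSubgaussianMGF

variable [IsProbabilityMeasure μ] {X : Ω → ℝ} {c : ℝ≥0}

lemma integral_cond_le (h : HasSubgaussianMGF X c μ) (hμs : μ s ≠ 0) :
    ∫ ω, X ω ∂μ[|s] ≤ √(2 * c * log (μ.real s)⁻¹) := by
  have := cond_isProbabilityMeasure (s := s) hμs
  have hs_pos : 0 < μ.real s := ENNReal.toReal_pos hμs (measure_ne_top _ _)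
  refine le_sqrt_of_forall_mul_le c.2 (log_nonneg (one_le_inv₀ hs_pos |>.2 measureReal_le_one))
    fun t ht ↦ ?_
  have key : exp (t * ∫ ω, X ω ∂μ[|s]) ≤ (μ.real s)⁻¹ * exp (c * t ^ 2 / 2) :=
    calc exp (t * ∫ ω, X ω ∂μ[|s])
        = exp (∫ ω, t * X ω ∂μ[|s]) := by rw [integral_const_mul]
      _ ≤ ∫ ω, exp (t * X ω) ∂μ[|s] :=
        exp_integral_le_integral_exp ((h.integrable.cond hμs).const_mul t)
          ((h.integrable_exp_mul t).cond hμs)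
      _ ≤ (μ.real s)⁻¹ * mgf X μ t :=
        integral_cond_le_inv_mul_integral (fun _ ↦ (exp_pos _).le) (h.integrable_exp_mul t)
      _ ≤ (μ.real s)⁻¹ * exp (c * t ^ 2 / 2) := by gcongr; exact h.mgf_le t
  rw [← log_le_log_iff (exp_pos _) (by positivity), log_exp,
    log_mul (by positivity) (exp_pos _).ne', log_exp] at key
  linarith [mul_comm (∫ ω, X ω ∂μ[|s]) t]

lemma abs_integral_cond_le (h : HasSubgaussianMGF X c μ) (hμs : μ s ≠ 0) :
    |∫ ω, X ω ∂μ[|s]| ≤ √(2 * c * log (μ.real s)⁻¹) := by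
  refine abs_le.2 ⟨?_, h.integral_cond_le hμs⟩
  have := h.neg.integral_cond_le hμs
  rw [Pi.neg_def, integral_neg] at this
  linarith

end ProbabilityTheory.HasSubgaussianMGF

end Conditioning

section Empirical

variable {Ω Y : Type*} [MeasurableSpace Ω] [MeasurableSpace Y] {P : Measure Ω}
  {D : Measure Y} {A : Set Y}

lemma hasSubgaussianMGF_indicator_sub_measureReal [IsProbabilityMeasure P] {X : Ω → Y}
    (hX : HasLaw X D P) (hA : MeasurableSet A) :
    HasSubgaussianMGF (fun ω ↦ A.indicator 1 (X ω) - D.real A) (1 / 4) P := by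
  have hmeas : Measurable (A.indicator (1 : Y → ℝ)) := measurable_const.indicator hA
  have hmean : P[fun ω ↦ A.indicator (1 : Y → ℝ) (X ω)] = D.real A :=
    (hX.integral_comp hmeas.aestronglyMeasurable).trans (integral_indicator_one hA)
  have := hasSubgaussianMGF_of_mem_Icc (μ := P) (X := fun ω ↦ A.indicator (1 : Y → ℝ) (X ω))
    (a := 0) (b := 1) (hmeas.comp_aemeasurable hX.aemeasurable)
    (.of_forall fun ω ↦ ⟨Set.indicator_nonneg (by simp) _, Set.indicator_le_self' (by simp) _⟩)
  rw [hmean] at this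
  convert this using 1
  norm_num

lemma hasSubgaussianMGF_sum_indicator_sub_measureReal [IsProbabilityMeasure P] {ι : Type*}
    [Fintype ι] {x : ι → Ω → Y} (hindep : iIndepFun x P) (hx : ∀ i, HasLaw (x i) D P)
    (hA : MeasurableSet A) :
    HasSubgaussianMGF (fun ω ↦ ∑ i, (A.indicator 1 (x i ω) - D.real A))
      (Fintype.card ι / 4) P := by
  have := HasSubgaussianMGF.sum_of_iIndepFun (s := Finset.univ)
    (hindep.comp (fun _ y ↦ A.indicator (1 : Y → ℝ) y - D.real A)
      fun _ ↦ (measurable_const.indicator hA).sub_const _)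
    fun i _ ↦ hasSubgaussianMGF_indicator_sub_measureReal (hx i) hA
  convert this using 1
  · rfl
  · rw [Finset.sum_const, Finset.card_univ, nsmul_eq_mul]
    ring

lemma toReal_inv_natCast_smul_sum_map_apply [IsFiniteMeasure P] {k : ℕ}
    {x : Fin k → Ω → Y} (hx : ∀ i, Measurable (x i)) (hA : MeasurableSet A) :
    (((k : ℝ≥0∞)⁻¹ • ∑ i, P.map (x i)) A).toReal =
      (k : ℝ)⁻¹ * ∑ i, ∫ ω, A.indicator 1 (x i ω) ∂P := by
  rw [Measure.smul_apply, Measure.finsetSum_apply, smul_eq_mul, ENNReal.toReal_mul,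
    ENNReal.toReal_inv, ENNReal.toReal_natCast, ENNReal.toReal_sum fun i _ ↦ measure_ne_top _ _]
  congr 1
  refine Finset.sum_congr rfl fun i _ ↦ ?_
  rw [← Measure.real, ← integral_indicator_one hA]
  exact integral_map (hx i).aemeasurable (measurable_const.indicator hA).aestronglyMeasurable

lemma sub_toReal_inv_natCast_smul_sum_map_apply [IsProbabilityMeasure P] {k : ℕ}
    {x : Fin k → Ω → Y} (hx : ∀ i, Measurable (x i)) (hA : MeasurableSet A) (p : ℝ) (hk : k ≠ 0) :
    p - (((k : ℝ≥0∞)⁻¹ • ∑ i, P.map (x i)) A).toReal =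
      -(k : ℝ)⁻¹ * ∫ ω, ∑ i, (A.indicator 1 (x i ω) - p) ∂P := by
  have hint i : Integrable (fun ω ↦ A.indicator (1 : Y → ℝ) (x i ω)) P :=
    ((integrable_const 1).indicator hA).comp_measurable (hx i)
  rw [toReal_inv_natCast_smul_sum_map_apply hx hA,
    integral_finsetSum (f := fun i ω ↦ A.indicator 1 (x i ω) - p) _
      fun i _ ↦ (hint i).sub (integrable_const _)]
  simp only [integral_sub (hint _) (integrable_const _), integral_const, probReal_univ, one_smul,
    Finset.sum_sub_distrib, Finset.sum_const, Finset.card_univ, Fintype.card_fin, nsmul_eq_mul]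
  field_simp
  ring

end Empirical

theorem tv_of_conditioned_empirical_general
    {Ω : Type*} [MeasurableSpace Ω] (P : Measure Ω) [IsProbabilityMeasure P]
    {Y : Type*} [MeasurableSpace Y] (D : Measure Y) [IsProbabilityMeasure D]
    (k : ℕ) (hk : 1 ≤ k)
    (x : Fin k → Ω → Y) (hx : ∀ i, Measurable (x i))
    (hiid : P.map (fun ω i => x i ω) = Measure.pi fun _ : Fin k => D)
    (e : Set Ω)
    (δ : ℝ) (hδ0 : 0 < δ) (hPe : P e = ENNReal.ofReal δ)
    (A : Set Y) (hA : MeasurableSet A) :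
    |(D A).toReal -
        (((k : ℝ≥0∞)⁻¹ • ∑ i : Fin k, (ProbabilityTheory.cond P e).map (x i)) A).toReal|
      ≤ Real.sqrt (Real.log (1 / δ) / (2 * k)) := by
  have hvec : HasLaw (fun ω i ↦ x i ω) (Measure.pi fun _ ↦ D) P := ⟨by fun_prop, hiid⟩
  have hlaw i : HasLaw (x i) D P := (measurePreserving_eval _ i).comp_hasLaw hvec
  have hsubG := hasSubgaussianMGF_sum_indicator_sub_measureReal
    ((iIndepFun_iff_hasLaw_pi_pi hlaw).2 hvec) hlaw hA
  have hPe_ne : P e ≠ 0 := by simpa [hPe] using hδ0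
  have := cond_isProbabilityMeasure hPe_ne
  have hk0 : (0 : ℝ) < k := by exact_mod_cast hk
  rw [sub_toReal_inv_natCast_smul_sum_map_apply hx hA _ (by omega), abs_mul, abs_neg, abs_inv,
    abs_of_pos hk0]
  calc (k : ℝ)⁻¹ * |∫ ω, ∑ i, (A.indicator 1 (x i ω) - D.real A) ∂P[|e]|
      ≤ (k : ℝ)⁻¹ * √(2 * (Fintype.card (Fin k) / 4 : ℝ≥0) * log (P.real e)⁻¹) := by
        gcongr
        exact hsubG.abs_integral_cond_le hPe_ne
    _ = √(log (1 / δ) / (2 * k)) := by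
      have hPe_real : P.real e = δ := by simp [Measure.real, hPe, hδ0.le]
      rw [hPe_real, one_div δ, ← sqrt_sq (inv_nonneg.2 hk0.le), ← sqrt_mul (sq_nonneg _)]
      congr 1
      push_cast [Fintype.card_fin]
      field_simp
      ring

/-- Let `x₁, …, x_k` be i.i.d. with law `D` on a probability space
`(Ω, P)`, and let `e` be an event with `P(e) = δ ∈ (0,1]`.  Let `D_e` be the law of a
uniformly random element among `x₁, …, x_k`, conditioned on `e`, i.e.
`D_e = (1/k) • ∑ᵢ (P[·|e]).map xᵢ`.  Then `d_TV(D, D_e) ≤ √(ln(1/δ)/(2k))`, i.e. for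
every measurable set `A`, `|D(A) − D_e(A)| ≤ √(ln(1/δ)/(2k))`. -/
theorem tv_of_conditioned_empirical
    {Ω : Type*} [MeasurableSpace Ω] (P : Measure Ω) [IsProbabilityMeasure P]
    {Y : Type*} [MeasurableSpace Y] (D : Measure Y) [IsProbabilityMeasure D]
    (k : ℕ) (hk : 1 ≤ k)
    (x : Fin k → Ω → Y) (hx : ∀ i, Measurable (x i))
    (hiid : P.map (fun ω i => x i ω) = Measure.pi fun _ : Fin k => D)
    (e : Set Ω) (he : MeasurableSet e)
    (δ : ℝ) (hδ0 : 0 < δ) (hδ1 : δ ≤ 1) (hPe : P e = ENNReal.ofReal δ)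
    (A : Set Y) (hA : MeasurableSet A) :
    |(D A).toReal -
        (((k : ℝ≥0∞)⁻¹ • ∑ i : Fin k, (ProbabilityTheory.cond P e).map (x i)) A).toReal|
      ≤ Real.sqrt (Real.log (1 / δ) / (2 * k)) :=
  tv_of_conditioned_empirical_general P D k hk x hx hiid e δ hδ0 hPe A hA
end

section
/- Fix a distribution D on a finite set X, a concept c, η ∈ [0,1], and integers n, k ≥ 1. Consider any η-nasty-noise strategy against nk samples (for D and c), producing (S, Z, S′), and let σ be a uniformly random permutation of {1,…,nk} independent of (S, Z, S′); let (S′)^{(i)} denote the i-th block of n consecutive coordinates of σ(S′), where σ(S′)_j := S′_{σ(j)}. Then there exists a probability space carrying (S, Z, S′, σ) with this joint law, together with additional random variables S^{(1)},…,S^{(k)} ∈ (X × {−1,1})^n and z_1,…,z_k ∈ ℕ, such that: (1) the marginal law of (S^{(1)},…,S^{(k)}) is that of nk i.i.d. draws from D_c arranged into k blocks of length n; (2) the marginal law of (z_1,…,z_k) is that of k i.i.d. draws from Binomial(n, η); and (3) almost surely, for every i ∈ {1,…,k}, the number of coordinates j ∈ {1,…,n} with S^{(i)}_j ≠ (S′)^{(i)}_j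 is at most z_i. -/
open scoped ENNReal

/-- `Pr_{x ~ D}[h x ≠ c x]`: the error rate of hypothesis `h` w.r.t. the target
concept `c` under the distribution `D`. -/
noncomputable def errD {X : Type*} (D : PMF X) (h c : X → Bool) : ℝ≥0∞ :=
  ∑' x, if h x = c x then 0 else D x

/-- Expectation of `f` under the pmf `p`. -/
noncomputable def pmfExp {α : Type*} (p : PMF α) (f : α → ℝ≥0∞) : ℝ≥0∞ :=
  ∑' a, p a * f a

/-- The distribution `D_c` of a labeled example `(x, c x)` with `x ~ D`. -/
noncomputable def labeled {X : Type*} (D : PMF X) (c : X → Bool) : PMF (X × Bool) :=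
  D.map fun x => (x, c x)

/-- The `Binomial(m, η)` probability of the outcome `j`. -/
noncomputable def binomProb (m : ℕ) (η : ℝ) (j : ℕ) : ℝ≥0∞ :=
  (m.choose j : ℝ≥0∞) * ENNReal.ofReal η ^ j * ENNReal.ofReal (1 - η) ^ (m - j)

/-- An `η`-nasty-noise strategy against `m` samples, for distribution `D` and concept `c`:
a joint distribution `μ` of a triple `(S, Z, S')` such that the marginal law of `S` is that
of `m` i.i.d. draws from `D_c`, the marginal law of `|Z|` is `Binomial(m, η)`, and almost
surely `S'ᵢ = Sᵢ` for every `i ∉ Z`. -/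
structure NastyStrategy {X : Type*} (D : PMF X) (c : X → Bool) (η : ℝ) (m : ℕ) where
  μ : PMF ((Fin m → X × Bool) × Finset (Fin m) × (Fin m → X × Bool))
  marg_clean : ∀ s : Fin m → X × Bool, μ.map (fun t => t.1) s = ∏ i, labeled D c (s i)
  marg_card : ∀ j : ℕ, μ.map (fun t => t.2.1.card) j = binomProb m η j
  consistent : ∀ t ∈ μ.support, ∀ i : Fin m, i ∉ t.2.1 → t.2.2 i = t.1 i

/-- A randomized learner using `m` samples: it maps a labeled data set to a
distribution over hypotheses. -/
abbrev Learner (X : Type*) (m : ℕ) := (Fin m → X × Bool) → PMF (X → Bool)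

/-- `A` learns `𝒞` with expected error at most `ε` over `D` with `η`-nasty noise. -/
def LearnsExpErr {X : Type*} (D : PMF X) (𝒞 : Set (X → Bool)) {m : ℕ}
    (A : Learner X m) (η ε : ℝ) : Prop :=
  ∀ c ∈ 𝒞, ∀ st : NastyStrategy D c η m,
    pmfExp st.μ (fun t => pmfExp (A t.2.2) fun h => errD D h c) ≤ ENNReal.ofReal ε

theorem block_lt {n k : ℕ} (i : Fin k) (j : Fin n) : n * i.val + j.val < n * k :=
  calc n * i.val + j.val < n * i.val + n := Nat.add_lt_add_left j.isLt _
    _ = n * (i.val + 1) := by ring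
    _ ≤ n * k := Nat.mul_le_mul (le_refl n) i.isLt

/-- The `i`-th block of `n` consecutive coordinates of `T : Fin (n*k) → α`. -/
def blockOf {α : Type*} (n k : ℕ) (T : Fin (n * k) → α) (i : Fin k) : Fin n → α :=
  fun j => T ⟨n * i.val + j.val, block_lt i j⟩

/-! Let `σ` be uniform on permutations and independent of `(S, Z, S')`. Take `S⁽ⁱ⁾` to be the
`i`-th block of `σ(S)` and `zᵢ` the number of coordinates of block `i` that `σ` sends into `Z`.
For every fixed `σ`, `σ(S)` is again i.i.d. `D_c`, so the blocks are i.i.d. as well; and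
`σ(S)`, `σ(S')` agree off `σ⁻¹(Z)`, which bounds the mismatches in block `i` by `zᵢ`.
Given `|Z| = m`, the set `σ⁻¹(Z)` is a uniform `m`-subset, so the `zᵢ` are multivariate
hypergeometric; mixing over `m ~ Binomial(nk, η)` makes them i.i.d. `Binomial(n, η)`. -/

open Finset

namespace PMF

variable {α β : Type*}

lemma map_apply_of_injective {f : α → β} (hf : f.Injective) (p : PMF α) (a : α) :
    p.map f (f a) = p a := by
  rw [map_apply, tsum_eq_single a fun b hb => if_neg (hf.ne hb).symm, if_pos rfl]

lemma map_equiv_apply (e : α ≃ β) (p : PMF α) (b : β) : p.map e b = p (e.symm b) := by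
  simpa using p.map_apply_of_injective e.injective (e.symm b)

lemma bind_apply_of_forall_eq {p : PMF α} {f : α → PMF β} {b : β} {c : ℝ≥0∞}
    (h : ∀ a, f a b = c) : p.bind f b = c := by
  simp [bind_apply, h, ENNReal.tsum_mul_right]

lemma tsum_mul_comp_eq_tsum_map_mul (p : PMF α) (f : α → β) (g : β → ℝ≥0∞) :
    ∑' a, p a * g (f a) = ∑' b, p.map f b * g b := by
  simp_rw [map_apply, ← ENNReal.tsum_mul_right, ite_mul, zero_mul]
  rw [ENNReal.tsum_comm]
  simp

lemma bind_map_prodMk_apply (p : PMF α) (q : PMF β) (a : α) (b : β) :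
    (p.bind fun a => q.map (Prod.mk a)) (a, b) = p a * q b := by
  rw [bind_apply, tsum_eq_single a, map_apply_of_injective (Prod.mk_right_injective a)]
  intro a' ha'
  simp [map_apply, Ne.symm ha']

lemma bind_map_prodMk_comm (p : PMF α) (q : PMF β) :
    (p.bind fun a => q.map (Prod.mk a)) = q.bind fun b => p.map fun a => (a, b) := by
  simp_rw [← bind_pure_comp]
  exact bind_comm _ _ _

lemma map_comp_equiv_apply_of_apply_eq_prod {ι κ : Type*} [Fintype ι] [Fintype κ]
    {p : PMF (ι → α)} {q : α → ℝ≥0∞} (hp : ∀ s, p s = ∏ i, q (s i)) (e : κ ≃ ι) (s : κ → α) :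
    p.map (fun x => x ∘ e) s = ∏ j, q (s j) := by
  have h := map_equiv_apply (e.symm.arrowCongr (Equiv.refl α)) p s
  rw [hp] at h
  refine Eq.trans ?_ (h.trans (e.symm.prod_comp fun j => q (s j)))
  rfl

end PMF

lemma ENNReal.natCast_mul_inv_eq_inv {a b c : ℕ} (h : c * a = b) (hb : b ≠ 0) :
    (a : ℝ≥0∞) * (b : ℝ≥0∞)⁻¹ = (c : ℝ≥0∞)⁻¹ := by
  refine ENNReal.eq_inv_of_mul_eq_one_left ?_
  rw [mul_right_comm, mul_comm (a : ℝ≥0∞), ← Nat.cast_mul, h]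
  exact ENNReal.mul_inv_cancel (by exact_mod_cast hb) (ENNReal.natCast_ne_top b)

lemma Equiv.subtypeCongr_apply_of_pos {α : Type*} {p q : α → Prop}
    [DecidablePred p] [DecidablePred q]
    (e : {x // p x} ≃ {x // q x}) (f : {x // ¬p x} ≃ {x // ¬q x}) {x : α} (hx : p x) :
    e.subtypeCongr f x = e ⟨x, hx⟩ := by
  simp [Equiv.subtypeCongr, Equiv.sumCompl_symm_apply_of_pos hx]

lemma Equiv.subtypeCongr_apply_of_neg {α : Type*} {p q : α → Prop}
    [DecidablePred p] [DecidablePred q]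
    (e : {x // p x} ≃ {x // q x}) (f : {x // ¬p x} ≃ {x // ¬q x}) {x : α} (hx : ¬p x) :
    e.subtypeCongr f x = f ⟨x, hx⟩ := by
  simp [Equiv.subtypeCongr, Equiv.sumCompl_symm_apply_of_neg hx]

section Relabelling

variable {α : Type*} [Fintype α] [DecidableEq α]

def Equiv.Perm.mapsOntoEquiv (S T : Finset α) :
    {σ : Equiv.Perm α // ∀ x, σ x ∈ T ↔ x ∈ S} ≃ (S ≃ T) × ({x // x ∉ S} ≃ {x // x ∉ T}) where
  toFun σ := (σ.1.subtypeEquiv fun x => (σ.2 x).symm,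
    σ.1.subtypeEquiv fun x => not_congr (σ.2 x).symm)
  invFun ef := ⟨ef.1.subtypeCongr ef.2, fun x => by
    by_cases hx : x ∈ S
    · simp [Equiv.subtypeCongr_apply_of_pos _ _ hx, hx, (ef.1 ⟨x, hx⟩).2]
    · simp [Equiv.subtypeCongr_apply_of_neg _ _ hx, hx, (ef.2 ⟨x, hx⟩).2]⟩
  left_inv σ := by
    ext x
    by_cases hx : x ∈ S
    · simp [Equiv.subtypeCongr_apply_of_pos _ _ hx]
    · simp [Equiv.subtypeCongr_apply_of_neg _ _ hx]
  right_inv ef := by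
    ext ⟨x, hx⟩
    · simp [Equiv.subtypeCongr_apply_of_pos _ _ hx]
    · simp [Equiv.subtypeCongr_apply_of_neg _ _ hx]

lemma card_filter_perm_preimage_eq (Z T : Finset α) :
    #{σ : Equiv.Perm α | Z.preimage σ σ.injective.injOn = T}
      = if #T = #Z then (#Z).factorial * (Fintype.card α - #Z).factorial else 0 := by
  have hpre (σ : Equiv.Perm α) : Z.preimage σ σ.injective.injOn = T ↔ ∀ x, σ x ∈ Z ↔ x ∈ T := by
    simp [Finset.ext_iff]
  simp_rw [hpre]
  rw [← Fintype.card_subtype, Fintype.card_congr (Equiv.Perm.mapsOntoEquiv T Z), Fintype.card_prod]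
  split_ifs with h
  · rw [Fintype.card_equiv (Fintype.equivOfCardEq (by simpa using h)),
      Fintype.card_equiv (Fintype.equivOfCardEq (by simp [h]))]
    simp [h]
  · have : IsEmpty (T ≃ Z) := ⟨fun e => h (by simpa using Fintype.card_congr e)⟩
    simp

lemma PMF.uniformOfFintype_perm_map_preimage (Z : Finset α) :
    (uniformOfFintype (Equiv.Perm α)).map (fun σ : Equiv.Perm α => Z.preimage σ σ.injective.injOn)
      = uniformOfFinset (powersetCard #Z univ) (powersetCard_nonempty.2 (card_le_univ Z)) := by
  ext T
  simp only [map_apply, uniformOfFinset_apply, uniformOfFintype_apply, tsum_fintype,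
    mem_powersetCard, subset_univ, true_and, card_powersetCard, card_univ, Fintype.card_perm]
  rw [← sum_filter, sum_const, nsmul_eq_mul]
  simp_rw [eq_comm (a := T)]
  rw [card_filter_perm_preimage_eq]
  split_ifs with h
  · refine ENNReal.natCast_mul_inv_eq_inv ?_ (Nat.factorial_ne_zero _)
    rw [← mul_assoc]
    exact Nat.choose_mul_factorial_mul_factorial (card_le_univ Z)
  · simp

end Relabelling

section Blocks

variable {n k : ℕ}

def blockIdx (n k : ℕ) : Fin k × Fin n ≃ Fin (n * k) :=
  finProdFinEquiv.trans (finCongr (Nat.mul_comm k n))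

lemma blockOf_apply {α : Type*} (T : Fin (n * k) → α) (i : Fin k) (j : Fin n) :
    blockOf n k T i j = T (blockIdx n k (i, j)) := by
  simp only [blockOf, blockIdx, Equiv.trans_apply]
  congr 1
  ext
  simp [add_comm]

def blockSubsets (n k : ℕ) : Finset (Fin (n * k)) ≃ (Fin k → Finset (Fin n)) where
  toFun T i := {j | blockIdx n k (i, j) ∈ T}
  invFun f := {x | ((blockIdx n k).symm x).2 ∈ f ((blockIdx n k).symm x).1}
  left_inv T := by ext; simp
  right_inv f := by ext; simp

def blockCard (n k : ℕ) (T : Finset (Fin (n * k))) (i : Fin k) : ℕ :=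
  #(blockSubsets n k T i)

lemma sum_blockCard (T : Finset (Fin (n * k))) : ∑ i, blockCard n k T i = #T := by
  simp only [blockCard, blockSubsets, Equiv.coe_fn_mk, card_filter]
  rw [← Fintype.sum_prod_type' fun i j => if blockIdx n k (i, j) ∈ T then 1 else 0,
    (blockIdx n k).sum_comp fun l => if l ∈ T then 1 else 0]
  simp

lemma card_filter_blockCard_eq (z : Fin k → ℕ) :
    #{T | blockCard n k T = z} = ∏ i, n.choose (z i) := by
  rw [card_equiv (blockSubsets n k) (t := Fintype.piFinset fun i => powersetCard (z i) univ)]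
  · simp
  · intro T
    simp [blockCard, funext_iff]

end Blocks

lemma PMF.uniformOfFinset_powersetCard_map_blockCard_apply {n k m : ℕ}
    (hm : (powersetCard m (univ : Finset (Fin (n * k)))).Nonempty) (z : Fin k → ℕ) :
    (uniformOfFinset _ hm).map (blockCard n k) z
      = if ∑ i, z i = m then (∏ i, n.choose (z i) : ℕ) * ((n * k).choose m : ℝ≥0∞)⁻¹ else 0 := by
  have hcond (T : Finset (Fin (n * k))) :
      (z = blockCard n k T ∧ #T = m) ↔ (blockCard n k T = z ∧ ∑ i, z i = m) := by
    rw [← sum_blockCard T, eq_comm (a := z)]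
    constructor <;> rintro ⟨rfl, h⟩ <;> exact ⟨rfl, h⟩
  simp only [map_apply, uniformOfFinset_apply, mem_powersetCard, subset_univ, true_and,
    tsum_fintype, ← ite_and, hcond, card_powersetCard, card_univ, Fintype.card_fin]
  split_ifs with hz
  · simp [hz, ← sum_filter, card_filter_blockCard_eq]
  · simp [hz]

lemma PMF.uniformOfFintype_perm_map_blockCard_apply {n k : ℕ} (Z : Finset (Fin (n * k)))
    (z : Fin k → ℕ) :
    (uniformOfFintype (Equiv.Perm (Fin (n * k)))).map
        (fun σ : Equiv.Perm (Fin (n * k)) => blockCard n k (Z.preimage σ σ.injective.injOn)) z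
      = if ∑ i, z i = #Z then (∏ i, n.choose (z i) : ℕ) * ((n * k).choose #Z : ℝ≥0∞)⁻¹
        else 0 := by
  rw [show (fun σ : Equiv.Perm (Fin (n * k)) => blockCard n k (Z.preimage σ σ.injective.injOn))
      = blockCard n k ∘ fun σ : Equiv.Perm (Fin (n * k)) => Z.preimage σ σ.injective.injOn from rfl,
    ← map_comp, uniformOfFintype_perm_map_preimage,
    uniformOfFinset_powersetCard_map_blockCard_apply]

lemma binomProb_mul_hypergeom_eq_prod {n k : ℕ} (η : ℝ) (z : Fin k → ℕ) :
    binomProb (n * k) η (∑ i, z i)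
        * ((∏ i, n.choose (z i) : ℕ) * ((n * k).choose (∑ i, z i) : ℝ≥0∞)⁻¹)
      = ∏ i, binomProb n η (z i) := by
  by_cases hz : ∀ i, z i ≤ n
  · have hsum : ∑ i, z i ≤ n * k := by
      simpa [mul_comm] using sum_le_sum fun i (_ : i ∈ univ) => hz i
    have hsub : ∑ i, (n - z i) = n * k - ∑ i, z i := by
      rw [eq_tsub_iff_add_eq_of_le hsum, ← sum_add_distrib]
      simp [Nat.sub_add_cancel (hz _), mul_comm]
    have hC : ((n * k).choose (∑ i, z i) : ℝ≥0∞) ≠ 0 := by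
      exact_mod_cast (Nat.choose_pos hsum).ne'
    simp only [binomProb, prod_mul_distrib, prod_pow_eq_pow_sum, hsub, Nat.cast_prod]
    calc _ = (∏ i, (n.choose (z i) : ℝ≥0∞)) * ENNReal.ofReal η ^ (∑ i, z i)
            * ENNReal.ofReal (1 - η) ^ (n * k - ∑ i, z i)
            * (((n * k).choose (∑ i, z i) : ℝ≥0∞) * ((n * k).choose (∑ i, z i) : ℝ≥0∞)⁻¹) := by
          ring
      _ = _ := by rw [ENNReal.mul_inv_cancel hC (ENNReal.natCast_ne_top _), mul_one]
  · obtain ⟨i, hi⟩ := not_forall.1 hz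
    have hchoose : n.choose (z i) = 0 := Nat.choose_eq_zero_of_lt (not_le.1 hi)
    rw [prod_eq_zero (mem_univ i) hchoose,
      prod_eq_zero (mem_univ i) (by simp [binomProb, hchoose])]
    simp

namespace NastyStrategy

open PMF

variable {X : Type*} {D : PMF X} {c : X → Bool} {η : ℝ} {m n k : ℕ}

noncomputable def withPerm (st : NastyStrategy D c η m) :
    PMF (((Fin m → X × Bool) × Finset (Fin m) × (Fin m → X × Bool)) × Equiv.Perm (Fin m)) :=
  st.μ.bind fun t => (uniformOfFintype _).map (Prod.mk t)

noncomputable def blockCoupling (st : NastyStrategy D c η (n * k)) :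
    PMF (((Fin (n * k) → X × Bool) × Finset (Fin (n * k)) × (Fin (n * k) → X × Bool))
      × Equiv.Perm (Fin (n * k)) × (Fin k → Fin n → X × Bool) × (Fin k → ℕ)) :=
  st.withPerm.map fun p => (p.1, p.2, blockOf n k (fun l => p.1.1 (p.2 l)),
    blockCard n k (p.1.2.1.preimage p.2 p.2.injective.injOn))

variable (st : NastyStrategy D c η (n * k))

lemma blockCoupling_map_fst_apply
    (q : ((Fin (n * k) → X × Bool) × Finset (Fin (n * k)) × (Fin (n * k) → X × Bool))
      × Equiv.Perm (Fin (n * k))) :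
    st.blockCoupling.map (fun r => (r.1, r.2.1)) q
      = st.μ q.1 * uniformOfFintype (Equiv.Perm (Fin (n * k))) q.2 := by
  rw [blockCoupling, map_comp]
  exact (congrArg (· q) (map_id _)).trans (bind_map_prodMk_apply _ _ q.1 q.2)

lemma blockCoupling_map_clean_apply (s : Fin k → Fin n → X × Bool) :
    st.blockCoupling.map (fun r => r.2.2.1) s = ∏ i, ∏ j, labeled D c (s i j) := by
  rw [blockCoupling, map_comp, withPerm, bind_map_prodMk_comm, map_bind]
  refine bind_apply_of_forall_eq fun σ => ?_
  have hfactor : (st.μ.map fun t => blockOf n k fun l => t.1 (σ l))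
      = ((st.μ.map Prod.fst).map fun x => x ∘ (blockIdx n k).trans σ).map
          (Equiv.curry _ _ _) := by
    rw [map_comp, map_comp]
    congr 1
    funext t i j
    simp [blockOf_apply]
  rw [map_comp]
  change (st.μ.map fun t => blockOf n k fun l => t.1 (σ l)) s = _
  rw [hfactor, map_equiv_apply,
    map_comp_equiv_apply_of_apply_eq_prod (by simpa [map_apply] using st.marg_clean),
    Fintype.prod_prod_type]
  rfl

lemma blockCoupling_map_blockCard_apply (z : Fin k → ℕ) :
    st.blockCoupling.map (fun r => r.2.2.2) z = ∏ i, binomProb n η (z i) := by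
  rw [blockCoupling, map_comp, withPerm, map_bind, bind_apply]
  simp_rw [map_comp]
  calc _ = ∑' t, st.μ t * if ∑ i, z i = #t.2.1
          then (∏ i, n.choose (z i) : ℕ) * ((n * k).choose #t.2.1 : ℝ≥0∞)⁻¹ else 0 :=
        tsum_congr fun t => congrArg _ (uniformOfFintype_perm_map_blockCard_apply t.2.1 z)
    _ = ∑' j, st.μ.map (fun t => #t.2.1) j * if ∑ i, z i = j
          then (∏ i, n.choose (z i) : ℕ) * ((n * k).choose j : ℝ≥0∞)⁻¹ else 0 :=
        tsum_mul_comp_eq_tsum_map_mul _ _ fun j => if ∑ i, z i = j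
          then (∏ i, n.choose (z i) : ℕ) * ((n * k).choose j : ℝ≥0∞)⁻¹ else 0
    _ = binomProb (n * k) η (∑ i, z i)
          * ((∏ i, n.choose (z i) : ℕ) * ((n * k).choose (∑ i, z i) : ℝ≥0∞)⁻¹) := by
        rw [tsum_eq_single (∑ i, z i) fun j hj => by simp [Ne.symm hj]]
        simp [st.marg_card]
    _ = _ := binomProb_mul_hypergeom_eq_prod η z

lemma card_mismatch_le_of_mem_support_blockCoupling [DecidableEq X] :
    ∀ r ∈ st.blockCoupling.support, ∀ i,
      #{j | r.2.2.1 i j ≠ blockOf n k (fun l => r.1.2.2 (r.2.1 l)) i j} ≤ r.2.2.2 i := by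
  intro r hr i
  obtain ⟨⟨t, σ⟩, htσ, rfl⟩ := (mem_support_map_iff _ _ _).1 hr
  obtain ⟨t', ht', htσ'⟩ := (mem_support_bind_iff _ _ _).1 htσ
  obtain ⟨σ', -, h⟩ := (mem_support_map_iff _ _ _).1 htσ'
  obtain ⟨rfl, rfl⟩ := Prod.mk.inj h.symm
  refine card_le_card (t := blockSubsets n k (t.2.1.preimage σ σ.injective.injOn) i)
    fun j hj => ?_
  simp only [mem_filter, mem_univ, true_and, blockOf_apply] at hj
  simp only [blockSubsets, Equiv.coe_fn_mk, mem_filter, mem_univ, true_and, mem_preimage]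
  by_contra hZ
  exact hj (st.consistent t ht' _ hZ).symm

end NastyStrategy

theorem group_dists_general
    {X : Type*} [DecidableEq X]
    (D : PMF X) (c : X → Bool) (η : ℝ)
    (n k : ℕ)
    (st : NastyStrategy D c η (n * k)) :
    ∃ ν : PMF (((Fin (n * k) → X × Bool) × Finset (Fin (n * k)) × (Fin (n * k) → X × Bool))
        × Equiv.Perm (Fin (n * k)) × (Fin k → Fin n → X × Bool) × (Fin k → ℕ)),
      (∀ q : ((Fin (n * k) → X × Bool) × Finset (Fin (n * k)) × (Fin (n * k) → X × Bool))
            × Equiv.Perm (Fin (n * k)),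
          ν.map (fun r => (r.1, r.2.1)) q
            = st.μ q.1 * PMF.uniformOfFintype (Equiv.Perm (Fin (n * k))) q.2) ∧
      (∀ s : Fin k → Fin n → X × Bool,
          ν.map (fun r => r.2.2.1) s = ∏ i, ∏ j, labeled D c (s i j)) ∧
      (∀ z : Fin k → ℕ, ν.map (fun r => r.2.2.2) z = ∏ i, binomProb n η (z i)) ∧
      (∀ r ∈ ν.support, ∀ i : Fin k,
          (Finset.univ.filter fun j : Fin n =>
              r.2.2.1 i j ≠ blockOf n k (fun l => r.1.2.2 (r.2.1 l)) i j).card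
            ≤ r.2.2.2 i) :=
  ⟨st.blockCoupling, st.blockCoupling_map_fst_apply, st.blockCoupling_map_clean_apply,
    st.blockCoupling_map_blockCard_apply, st.card_mismatch_le_of_mem_support_blockCoupling⟩

/-- Given any `η`-nasty-noise strategy against `n*k` samples producing
`(S, Z, S')`, together with an independent uniformly random permutation `σ` of the `n*k`
coordinates, there is a probability space (a joint pmf `ν`) carrying `(S, Z, S', σ)` with
this joint law together with extra random variables `S⁽¹⁾, …, S⁽ᵏ⁾` and `z₁, …, z_k`
such that: (1) `(S⁽¹⁾, …, S⁽ᵏ⁾)` is distributed as `n*k` i.i.d. draws from `D_c` arranged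
into `k` blocks of length `n`; (2) `(z₁, …, z_k)` is distributed as `k` i.i.d. draws from
`Binomial(n, η)`; (3) almost surely, for every `i`, the number of coordinates `j` with
`S⁽ⁱ⁾ⱼ ≠ (S')⁽ⁱ⁾ⱼ` is at most `zᵢ`, where `(S')⁽ⁱ⁾` is the `i`-th block of `σ(S')`. -/
theorem group_dists
    {X : Type*} [Fintype X] [DecidableEq X] [Nonempty X]
    (D : PMF X) (c : X → Bool) (η : ℝ) (hη0 : 0 ≤ η) (hη1 : η ≤ 1)
    (n k : ℕ) (hn : 0 < n) (hk : 0 < k)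
    (st : NastyStrategy D c η (n * k)) :
    ∃ ν : PMF (((Fin (n * k) → X × Bool) × Finset (Fin (n * k)) × (Fin (n * k) → X × Bool))
        × Equiv.Perm (Fin (n * k)) × (Fin k → Fin n → X × Bool) × (Fin k → ℕ)),
      (∀ q : ((Fin (n * k) → X × Bool) × Finset (Fin (n * k)) × (Fin (n * k) → X × Bool))
            × Equiv.Perm (Fin (n * k)),
          ν.map (fun r => (r.1, r.2.1)) q
            = st.μ q.1 * PMF.uniformOfFintype (Equiv.Perm (Fin (n * k))) q.2) ∧
      (∀ s : Fin k → Fin n → X × Bool,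
          ν.map (fun r => r.2.2.1) s = ∏ i, ∏ j, labeled D c (s i j)) ∧
      (∀ z : Fin k → ℕ, ν.map (fun r => r.2.2.2) z = ∏ i, binomProb n η (z i)) ∧
      (∀ r ∈ ν.support, ∀ i : Fin k,
          (Finset.univ.filter fun j : Fin n =>
              r.2.2.1 i j ≠ blockOf n k (fun l => r.1.2.2 (r.2.1 l)) i j).card
            ≤ r.2.2.2 i) :=
  group_dists_general D c η n k st
end

section
/- Fix a distribution D on a finite set X, a concept class C, reals ε, δ, η > 0 with η ≤ 1, and integers n < m. Let A be a randomized learner using n samples, and let A′ := A ∘ Φ_{m→n} be the learner using m samples that first applies the subsampling filter Φ_{m→n} and then runs A on the result. If A′ (ε, δ)-learns C over D with η-fixed-rate nasty noise, then A′ (ε, δ + n/√m + n/m)-learns C over D with η-nasty noise. -/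
open scoped ENNReal

/-- An `η`-fixed-rate-nasty-noise strategy against `m` samples: identical to an
`η`-nasty-noise strategy, except that almost surely `|Z| = ⌊η·m⌋` exactly. -/
structure FixedNastyStrategy {X : Type*} (D : PMF X) (c : X → Bool) (η : ℝ) (m : ℕ) where
  μ : PMF ((Fin m → X × Bool) × Finset (Fin m) × (Fin m → X × Bool))
  marg_clean : ∀ s : Fin m → X × Bool, μ.map (fun t => t.1) s = ∏ i, labeled D c (s i)
  card_eq : ∀ t ∈ μ.support, t.2.1.card = Nat.floor (η * m)
  consistent : ∀ t ∈ μ.support, ∀ i : Fin m, i ∉ t.2.1 → t.2.2 i = t.1 i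

/-- `B` `(ε, δ)`-learns `𝒞` over `D` with `η`-nasty noise. -/
def LearnsPAC {X : Type*} (D : PMF X) (𝒞 : Set (X → Bool)) {m : ℕ}
    (B : Learner X m) (η ε δ : ℝ) : Prop :=
  ∀ c ∈ 𝒞, ∀ st : NastyStrategy D c η m,
    (st.μ.bind fun t => B t.2.2).toOuterMeasure {h : X → Bool | ENNReal.ofReal ε < errD D h c}
      ≤ ENNReal.ofReal δ

/-- `B` `(ε, δ)`-learns `𝒞` over `D` with `η`-fixed-rate nasty noise. -/
def LearnsPACFixed {X : Type*} (D : PMF X) (𝒞 : Set (X → Bool)) {m : ℕ}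
    (B : Learner X m) (η ε δ : ℝ) : Prop :=
  ∀ c ∈ 𝒞, ∀ st : FixedNastyStrategy D c η m,
    (st.μ.bind fun t => B t.2.2).toOuterMeasure {h : X → Bool | ENNReal.ofReal ε < errD D h c}
      ≤ ENNReal.ofReal δ

/-- The subsampling filter `Φ_{m→n}`: choose a uniformly random `n`-element subset of
the positions `{1,…,m}` and return the corresponding length-`n` subsequence of `T`. -/
noncomputable def subsample {α : Type*} {m n : ℕ} (h : n ≤ m) (T : Fin m → α) :
    PMF (Fin n → α) :=
  haveI : Nonempty {s : Finset (Fin m) // s.card = n} := by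
    obtain ⟨t, -, ht⟩ :=
      Finset.exists_subset_card_eq (s := (Finset.univ : Finset (Fin m))) (n := n) (by simpa using h)
    exact ⟨⟨t, ht⟩⟩
  (PMF.uniformOfFintype {s : Finset (Fin m) // s.card = n}).map
    fun s j => T (s.1.orderIsoOfFin s.2 j).1

/-!
Couple a nasty-noise run `(S, Z, S')` with a fixed-rate one: choose `W` of size
`k = ⌊η m⌋` with `W ⊆ Z` or `Z ⊆ W`, and undo the corruptions outside `W`. The two corrupted
samples differ in at most `|Z| - k` positions, and a uniformly random `n`-subset of the
positions contains a given one with probability `n / m`, so the failure probability of the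
subsampled learner grows by at most `E[|Z| - k] · n / m`. As `|Z| ~ Binomial(m, η)`,
Cauchy–Schwarz against the binomial variance gives `E[|Z| - k] ≤ E|Z - η m| + 1 ≤ √m + 1`.
-/

open Finset

section PMF

variable {α β : Type*}

theorem pmfExp_map (p : PMF α) (g : α → β) (f : β → ℝ≥0∞) :
    pmfExp (p.map g) f = pmfExp p (f ∘ g) := by
  classical
  have hfiber : ∀ b, (p.map g) b * f b = ∑' a, (if b = g a then p a else 0) * f b := by
    intro b
    rw [PMF.map_apply, ENNReal.tsum_mul_right]
  rw [pmfExp, tsum_congr hfiber, ENNReal.tsum_comm, pmfExp]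
  refine tsum_congr fun a => ?_
  rw [tsum_eq_single (g a) fun b hb => by rw [if_neg hb, zero_mul], if_pos rfl]
  rfl

theorem pmfExp_mul_const (p : PMF α) (f : α → ℝ≥0∞) (r : ℝ≥0∞) :
    pmfExp p (fun a => f a * r) = pmfExp p f * r := by
  simp only [pmfExp, ← mul_assoc, ENNReal.tsum_mul_right]

theorem pmfExp_indicator_one (p : PMF α) (s : Set α) :
    pmfExp p (s.indicator 1) = p.toOuterMeasure s := by
  rw [pmfExp, PMF.toOuterMeasure_apply]
  refine tsum_congr fun a => ?_
  by_cases ha : a ∈ s <;> simp [ha]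

theorem PMF.toOuterMeasure_bind_le_add_pmfExp {p : PMF α} {f g : α → PMF β} {d : α → ℝ≥0∞}
    (s : Set β) (h : ∀ a ∈ p.support, (f a).toOuterMeasure s ≤ (g a).toOuterMeasure s + d a) :
    (p.bind f).toOuterMeasure s ≤ (p.bind g).toOuterMeasure s + pmfExp p d := by
  rw [toOuterMeasure_bind_apply, toOuterMeasure_bind_apply, pmfExp, ← ENNReal.tsum_add]
  refine ENNReal.tsum_le_tsum fun a => ?_
  by_cases ha : p a = 0
  · simp [ha]
  · rw [← mul_add]
    exact mul_le_mul_right (h a ((p.mem_support_iff a).2 ha)) _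

theorem PMF.toOuterMeasure_bind_le_add_of_eqOn_compl {p : PMF α} {f g : α → PMF β} {t : Set α}
    (s : Set β) (h : ∀ a ∉ t, f a = g a) :
    (p.bind f).toOuterMeasure s ≤ (p.bind g).toOuterMeasure s + p.toOuterMeasure t := by
  rw [← pmfExp_indicator_one]
  refine toOuterMeasure_bind_le_add_pmfExp s fun a _ => ?_
  by_cases ha : a ∈ t
  · calc (f a).toOuterMeasure s ≤ 1 :=
          (MeasureTheory.measure_mono (Set.subset_univ s)).trans_eq
            (((f a).toOuterMeasure_apply_eq_one_iff _).2 (Set.subset_univ _))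
      _ ≤ _ := by simp [ha]
  · simp [h a ha, ha]

end PMF

section Binomial

variable {m : ℕ} {η : ℝ}

theorem binomProb_eq_ofReal_eval_bernsteinPolynomial (hη0 : 0 ≤ η) (hη1 : η ≤ 1) (j : ℕ) :
    binomProb m η j = ENNReal.ofReal ((bernsteinPolynomial ℝ m j).eval η) := by
  have h1η : 0 ≤ 1 - η := by linarith
  simp only [binomProb, bernsteinPolynomial, Polynomial.eval_mul, Polynomial.eval_pow,
    Polynomial.eval_natCast, Polynomial.eval_X, Polynomial.eval_sub, Polynomial.eval_one]
  rw [ENNReal.ofReal_mul (by positivity), ENNReal.ofReal_mul (by positivity),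
    ENNReal.ofReal_natCast, ENNReal.ofReal_pow hη0, ENNReal.ofReal_pow h1η]

theorem eval_bernsteinPolynomial_nonneg (hη0 : 0 ≤ η) (hη1 : η ≤ 1) (j : ℕ) :
    0 ≤ (bernsteinPolynomial ℝ m j).eval η := by
  have h1η : 0 ≤ 1 - η := by linarith
  simp only [bernsteinPolynomial, Polynomial.eval_mul, Polynomial.eval_pow,
    Polynomial.eval_natCast, Polynomial.eval_X, Polynomial.eval_sub, Polynomial.eval_one]
  positivity

theorem sum_eval_bernsteinPolynomial (m : ℕ) (η : ℝ) :
    ∑ j ∈ range (m + 1), (bernsteinPolynomial ℝ m j).eval η = 1 := by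
  simpa [Polynomial.eval_finsetSum] using
    congrArg (Polynomial.eval η) (bernsteinPolynomial.sum ℝ m)

theorem sum_eval_bernsteinPolynomial_mul_abs_sub_le (hη0 : 0 ≤ η) (hη1 : η ≤ 1) :
    ∑ j ∈ range (m + 1), (bernsteinPolynomial ℝ m j).eval η * |m * η - j| ≤ √m := by
  set b : ℕ → ℝ := fun j => (bernsteinPolynomial ℝ m j).eval η
  have hb : ∀ j, 0 ≤ b j := eval_bernsteinPolynomial_nonneg hη0 hη1
  have hvar : ∑ j ∈ range (m + 1), (m * η - j) ^ 2 * b j = m * η * (1 - η) := by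
    simpa [Polynomial.eval_finsetSum] using
      congrArg (Polynomial.eval η) (bernsteinPolynomial.variance ℝ m)
  have hsqrt : ∀ j, √(b j) * √((m * η - j) ^ 2 * b j) = b j * |m * η - j| := fun j => by
    rw [Real.sqrt_mul (sq_nonneg _), Real.sqrt_sq_eq_abs, mul_left_comm,
      Real.mul_self_sqrt (hb j), mul_comm]
  calc ∑ j ∈ range (m + 1), b j * |m * η - j|
      = ∑ j ∈ range (m + 1), √(b j) * √((m * η - j) ^ 2 * b j) := by simp only [hsqrt]
    _ ≤ √(∑ j ∈ range (m + 1), b j) * √(∑ j ∈ range (m + 1), (m * η - j) ^ 2 * b j) :=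
        Real.sum_sqrt_mul_sqrt_le _ hb fun j => mul_nonneg (sq_nonneg _) (hb j)
    _ ≤ √m := by
        rw [sum_eval_bernsteinPolynomial, hvar, Real.sqrt_one, one_mul]
        exact Real.sqrt_le_sqrt
          (by nlinarith [mul_nonneg (Nat.cast_nonneg' m) (sq_nonneg (η - 1 / 2))])

theorem Nat.cast_tsub_floor_le_abs_sub_add_one (a : ℝ) (j : ℕ) :
    ((j - ⌊a⌋₊ : ℕ) : ℝ) ≤ |a - j| + 1 := by
  rcases le_total j ⌊a⌋₊ with h | h
  · rw [Nat.sub_eq_zero_of_le h, Nat.cast_zero]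
    positivity
  · rw [Nat.cast_sub h, abs_sub_comm]
    linarith [Nat.lt_floor_add_one a, le_abs_self ((j : ℝ) - a)]

theorem sum_eval_bernsteinPolynomial_mul_tsub_floor_le (hη0 : 0 ≤ η) (hη1 : η ≤ 1) :
    ∑ j ∈ range (m + 1), (bernsteinPolynomial ℝ m j).eval η * ((j - ⌊η * m⌋₊ : ℕ) : ℝ)
      ≤ √m + 1 := by
  have hb := eval_bernsteinPolynomial_nonneg (m := m) hη0 hη1
  calc _ ≤ ∑ j ∈ range (m + 1),
        ((bernsteinPolynomial ℝ m j).eval η * |m * η - j| + (bernsteinPolynomial ℝ m j).eval η) :=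
        sum_le_sum fun j _ => (mul_le_mul_of_nonneg_left
          (mul_comm η m ▸ Nat.cast_tsub_floor_le_abs_sub_add_one (η * m) j) (hb j)).trans_eq
          (mul_add_one _ _)
    _ ≤ √m + 1 := by
        rw [sum_add_distrib, sum_eval_bernsteinPolynomial]
        linarith [sum_eval_bernsteinPolynomial_mul_abs_sub_le (m := m) hη0 hη1]

theorem tsum_binomProb_mul_tsub_floor_le (hη0 : 0 ≤ η) (hη1 : η ≤ 1) :
    ∑' j, binomProb m η j * ((j - ⌊η * m⌋₊ : ℕ) : ℝ≥0∞) ≤ ENNReal.ofReal (√m + 1) := by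
  have hb := eval_bernsteinPolynomial_nonneg (m := m) hη0 hη1
  have hvanish : ∀ j ∉ range (m + 1), binomProb m η j * ((j - ⌊η * m⌋₊ : ℕ) : ℝ≥0∞) = 0 :=
    fun j hj => by simp [binomProb, Nat.choose_eq_zero_of_lt (by simpa using hj : m < j)]
  have hterm : ∀ j, binomProb m η j * ((j - ⌊η * m⌋₊ : ℕ) : ℝ≥0∞)
      = ENNReal.ofReal ((bernsteinPolynomial ℝ m j).eval η * ((j - ⌊η * m⌋₊ : ℕ) : ℝ)) :=
    fun j => by
      rw [binomProb_eq_ofReal_eval_bernsteinPolynomial hη0 hη1, ENNReal.ofReal_mul (hb j),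
        ENNReal.ofReal_natCast]
  rw [tsum_eq_sum hvanish, sum_congr rfl fun j _ => hterm j,
    ← ENNReal.ofReal_sum_of_nonneg fun j _ => mul_nonneg (hb j) (Nat.cast_nonneg _)]
  exact ENNReal.ofReal_le_ofReal (sum_eval_bernsteinPolynomial_mul_tsub_floor_le hη0 hη1)

end Binomial

section Subsample

theorem card_mul_card_finset_card_eq_and_mem {α : Type*} [Fintype α] [DecidableEq α]
    (n : ℕ) (i : α) :
    Fintype.card α * Fintype.card {s : Finset α // #s = n ∧ i ∈ s}
      = (Fintype.card α).choose n * n := by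
  rw [Fintype.card_subtype]
  rcases n with _ | k
  · simp
  have hfilter : ({s | #s = k + 1 ∧ i ∈ s} : Finset (Finset α))
      = (powersetCard (k + 1) univ).filter ({i} ⊆ ·) := by
    ext s; simp
  have : Nonempty α := ⟨i⟩
  obtain ⟨c, hc⟩ := Nat.exists_eq_add_one_of_ne_zero (Fintype.card_ne_zero (α := α))
  rw [hfilter, card_filter_powersetCard_subset _ _ _ (subset_univ _) (by simp), card_univ,
    card_singleton, hc, Nat.add_sub_cancel, Nat.add_sub_cancel, Nat.add_one_mul_choose_eq]

theorem uniformOfFintype_toOuterMeasure_mem {α : Type*} [Fintype α] (n : ℕ)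
    [Nonempty {s : Finset α // #s = n}] (i : α) :
    (PMF.uniformOfFintype {s : Finset α // #s = n}).toOuterMeasure {s | i ∈ s.1}
      = n / Fintype.card α := by
  classical
  have hcard : Fintype.card {s : Finset α // #s = n} = (Fintype.card α).choose n := by
    simp [Fintype.card_subtype]
  have hmem : Fintype.card {s : {s : Finset α // #s = n} | i ∈ s.1}
      = Fintype.card {s : Finset α // #s = n ∧ i ∈ s} :=
    Fintype.card_congr (Equiv.subtypeSubtypeEquivSubtypeInter _ (i ∈ ·))
  have : Nonempty α := ⟨i⟩
  rw [PMF.toOuterMeasure_uniformOfFintype_apply, hmem, hcard,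
    ENNReal.div_eq_div_iff (by simp) (by simp)
      (by rw [← hcard]; exact_mod_cast Fintype.card_ne_zero) (by simp)]
  exact_mod_cast card_mul_card_finset_card_eq_and_mem n i

theorem subsample_eq_map {α : Type*} {m n : ℕ} (h : n ≤ m) (T : Fin m → α)
    [Nonempty {s : Finset (Fin m) // #s = n}] :
    subsample h T = (PMF.uniformOfFintype {s : Finset (Fin m) // #s = n}).map
      fun s j => T (s.1.orderIsoOfFin s.2 j) :=
  rfl

theorem toOuterMeasure_bind_subsample_le {α β : Type*} {m n : ℕ} (h : n ≤ m)
    (A : (Fin n → α) → PMF β) {T T' : Fin m → α} {Δ : Finset (Fin m)}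
    (hΔ : ∀ i ∉ Δ, T i = T' i) (E : Set β) :
    ((subsample h T).bind A).toOuterMeasure E
      ≤ ((subsample h T').bind A).toOuterMeasure E + #Δ * (n / m) := by
  have : Nonempty {s : Finset (Fin m) // #s = n} := by
    obtain ⟨s, -, hs⟩ := exists_subset_card_eq (s := (univ : Finset (Fin m))) (by simpa using h)
    exact ⟨⟨s, hs⟩⟩
  rw [subsample_eq_map, subsample_eq_map, PMF.bind_map, PMF.bind_map]
  refine (PMF.toOuterMeasure_bind_le_add_of_eqOn_compl (t := ⋃ i ∈ Δ, {s | i ∈ s.1}) E ?_).trans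
    (add_le_add_right ?_ _)
  · intro s hs
    simp only [Set.mem_iUnion, Set.mem_ofPred_eq, not_exists] at hs
    refine congrArg A (funext fun j => hΔ _ fun hj => hs _ hj (s.1.orderIsoOfFin s.2 j).2)
  · calc _ ≤ ∑ i ∈ Δ, (PMF.uniformOfFintype {s : Finset (Fin m) // #s = n}).toOuterMeasure
            {s | i ∈ s.1} :=
          MeasureTheory.measure_biUnion_finset_le _ _
      _ = #Δ * (n / m) := by
          rw [sum_congr rfl fun i _ => uniformOfFintype_toOuterMeasure_mem n i, sum_const,
            nsmul_eq_mul, Fintype.card_fin]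

end Subsample

theorem Nat.floor_mul_le_of_le_one {η : ℝ} (hη1 : η ≤ 1) (m : ℕ) : ⌊η * m⌋₊ ≤ m :=
  Nat.floor_le_of_le (mul_le_of_le_one_left (Nat.cast_nonneg m) hη1)

theorem Finset.exists_card_eq_card_sdiff_le {α : Type*} [Fintype α] [DecidableEq α]
    (Z : Finset α) {k : ℕ} (hk : k ≤ Fintype.card α) :
    ∃ W : Finset α, #W = k ∧ #(Z \ W) ≤ #Z - k := by
  rcases le_total k #Z with h | h
  · obtain ⟨W, hWZ, hW⟩ := exists_subset_card_eq h
    exact ⟨W, hW, by rw [card_sdiff_of_subset hWZ, hW]⟩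
  · obtain ⟨W, hZW, hW⟩ := exists_superset_card_eq h hk
    exact ⟨W, hW, by simp [sdiff_eq_empty_iff_subset.2 hZW]⟩

namespace NastyStrategy

variable {X : Type*} {D : PMF X} {c : X → Bool} {η : ℝ} {m : ℕ}

-- Positions of `W` left clean still form a legal corruption set: nasty noise only
-- constrains the sample outside it.
def recorrupt (W : Finset (Fin m))
    (t : (Fin m → X × Bool) × Finset (Fin m) × (Fin m → X × Bool)) :
    (Fin m → X × Bool) × Finset (Fin m) × (Fin m → X × Bool) :=
  (t.1, W, fun i => if i ∈ W then t.2.2 i else t.1 i)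

theorem exists_fixedRateCorruption (hη1 : η ≤ 1) (Z : Finset (Fin m)) :
    ∃ W : Finset (Fin m), #W = ⌊η * m⌋₊ ∧ #(Z \ W) ≤ #Z - ⌊η * m⌋₊ :=
  Z.exists_card_eq_card_sdiff_le (by simpa using Nat.floor_mul_le_of_le_one hη1 m)

noncomputable def fixedRateCorruption (hη1 : η ≤ 1) (Z : Finset (Fin m)) : Finset (Fin m) :=
  (exists_fixedRateCorruption hη1 Z).choose

theorem card_fixedRateCorruption (hη1 : η ≤ 1) (Z : Finset (Fin m)) :
    #(fixedRateCorruption hη1 Z) = ⌊η * m⌋₊ :=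
  (exists_fixedRateCorruption hη1 Z).choose_spec.1

theorem card_sdiff_fixedRateCorruption_le (hη1 : η ≤ 1) (Z : Finset (Fin m)) :
    #(Z \ fixedRateCorruption hη1 Z) ≤ #Z - ⌊η * m⌋₊ :=
  (exists_fixedRateCorruption hη1 Z).choose_spec.2

noncomputable def toFixedRate (st : NastyStrategy D c η m) (hη1 : η ≤ 1) :
    FixedNastyStrategy D c η m where
  μ := st.μ.map fun t => recorrupt (fixedRateCorruption hη1 t.2.1) t
  marg_clean s := by rw [PMF.map_comp]; exact st.marg_clean s
  card_eq t ht := by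
    obtain ⟨t₀, -, rfl⟩ := (PMF.mem_support_map_iff _ _ _).1 ht
    exact card_fixedRateCorruption hη1 _
  consistent t ht i hi := by
    obtain ⟨t₀, -, rfl⟩ := (PMF.mem_support_map_iff _ _ _).1 ht
    exact if_neg hi

theorem recorrupt_eq_of_notMem_sdiff (st : NastyStrategy D c η m) {t} (ht : t ∈ st.μ.support)
    {W : Finset (Fin m)} {i : Fin m} (hi : i ∉ t.2.1 \ W) :
    t.2.2 i = (recorrupt W t).2.2 i := by
  by_cases hiW : i ∈ W
  · exact (if_pos hiW).symm
  · rw [show (recorrupt W t).2.2 i = t.1 i from if_neg hiW]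
    exact st.consistent t ht i fun hiZ => hi (mem_sdiff.2 ⟨hiZ, hiW⟩)

theorem pmfExp_card_tsub_floor_le (st : NastyStrategy D c η m) (hη0 : 0 ≤ η) (hη1 : η ≤ 1) :
    pmfExp st.μ (fun t => ((#t.2.1 - ⌊η * m⌋₊ : ℕ) : ℝ≥0∞)) ≤ ENNReal.ofReal (√m + 1) := by
  have hmap := pmfExp_map st.μ (fun t => #t.2.1) (fun j => ((j - ⌊η * m⌋₊ : ℕ) : ℝ≥0∞))
  rw [Function.comp_def] at hmap
  rw [← hmap, pmfExp]
  simp only [st.marg_card]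
  exact tsum_binomProb_mul_tsub_floor_le hη0 hη1

theorem toOuterMeasure_bind_subsample_le_toFixedRate (st : NastyStrategy D c η m) (hη1 : η ≤ 1)
    {n : ℕ} (hnm : n ≤ m) {β : Type*} (A : (Fin n → X × Bool) → PMF β) (E : Set β) :
    (st.μ.bind fun t => (subsample hnm t.2.2).bind A).toOuterMeasure E
      ≤ ((st.toFixedRate hη1).μ.bind fun t => (subsample hnm t.2.2).bind A).toOuterMeasure E
        + pmfExp st.μ (fun t => ((#t.2.1 - ⌊η * m⌋₊ : ℕ) : ℝ≥0∞) * (n / m)) := by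
  rw [toFixedRate, PMF.bind_map]
  refine PMF.toOuterMeasure_bind_le_add_pmfExp E fun t ht => ?_
  refine (toOuterMeasure_bind_subsample_le hnm A
    (fun _ hi => st.recorrupt_eq_of_notMem_sdiff ht (W := fixedRateCorruption hη1 t.2.1) hi)
    E).trans (add_le_add le_rfl ?_)
  gcongr
  exact_mod_cast card_sdiff_fixedRateCorruption_le hη1 t.2.1

end NastyStrategy

theorem fixed_rate_to_standard_nasty_general
    {X : Type*}
    (D : PMF X) (𝒞 : Set (X → Bool)) (ε δ η : ℝ)
    (hδ : 0 < δ) (hη : 0 < η) (hη1 : η ≤ 1)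
    (n m : ℕ) (hnm : n < m) (A : Learner X n)
    (hA : LearnsPACFixed D 𝒞 (fun T => (subsample hnm.le T).bind A) η ε δ) :
    LearnsPAC D 𝒞 (fun T => (subsample hnm.le T).bind A) η ε
      (δ + (n : ℝ) / Real.sqrt m + (n : ℝ) / m) := by
  intro c hc st
  have hm : (0 : ℝ) < m := by exact_mod_cast (Nat.zero_le n).trans_lt hnm
  calc _ ≤ _ + _ := st.toOuterMeasure_bind_subsample_le_toFixedRate hη1 hnm.le A _
    _ ≤ ENNReal.ofReal δ + ENNReal.ofReal (√m + 1) * ENNReal.ofReal (n / m) := by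
        rw [pmfExp_mul_const, ENNReal.ofReal_div_of_pos hm, ENNReal.ofReal_natCast,
          ENNReal.ofReal_natCast]
        exact add_le_add (hA c hc _) (mul_le_mul_left (st.pmfExp_card_tsub_floor_le hη.le hη1) _)
    _ = ENNReal.ofReal (δ + n / √m + n / m) := by
        rw [← ENNReal.ofReal_mul (by positivity), ← ENNReal.ofReal_add hδ.le (by positivity)]
        congr 1
        field_simp
        linear_combination (n : ℝ) * Real.mul_self_sqrt hm.le

/-- If `A' := A ∘ Φ_{m→n}` `(ε, δ)`-learns `𝒞` over `D` with
`η`-fixed-rate nasty noise, then `A'` `(ε, δ + n/√m + n/m)`-learns `𝒞` over `D` with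
(standard) `η`-nasty noise. -/
theorem fixed_rate_to_standard_nasty
    {X : Type*} [Fintype X] [Nonempty X]
    (D : PMF X) (𝒞 : Set (X → Bool)) (ε δ η : ℝ)
    (hε : 0 < ε) (hδ : 0 < δ) (hη : 0 < η) (hη1 : η ≤ 1)
    (n m : ℕ) (hnm : n < m) (A : Learner X n)
    (hA : LearnsPACFixed D 𝒞 (fun T => (subsample hnm.le T).bind A) η ε δ) :
    LearnsPAC D 𝒞 (fun T => (subsample hnm.le T).bind A) η ε
      (δ + (n : ℝ) / Real.sqrt m + (n : ℝ) / m) :=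
  fixed_rate_to_standard_nasty_general D 𝒞 ε δ η hδ hη hη1 n m hnm A hA
end

section
/- Let w ≥ 1 be an integer, let κ ∈ (0,1], and let v ∈ ℝ^w and u ∈ {−1,1}^w satisfy ‖v − u‖₁ ≤ (1−κ)·w. Then Pr[ham(Round(v), u) ≥ (1/2)·(1 − κ/2)·w] ≤ exp(−κ²·w/8), where Round(v) = (Round(v_1),…,Round(v_w)) with independent coordinates. -/
open scoped ENNReal

/-- The product of the pmfs `p 0, …, p (k-1)`: the joint distribution of independent
coordinates, the `i`-th having law `p i`. -/
noncomputable def pmfPi {β : Type*} : (k : ℕ) → (Fin k → PMF β) → PMF (Fin k → β)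
  | 0, _ => PMF.pure fun i => i.elim0
  | k + 1, p => (p 0).bind fun b => (pmfPi k fun i => p i.succ).map fun f => Fin.cons b f

/-- The randomized rounding function `Round : ℝ → {−1,1}` (as a pmf over `Bool`, where
`true` codes `1` and `false` codes `−1`): for `v ∈ [−1,1]`, `Round(v) = 1` with
probability `(1+v)/2`; for `|v| > 1`, `Round(v) = sign v` deterministically. -/
noncomputable def roundPMF (v : ℝ) : PMF Bool :=
  PMF.bernoulli (Real.toNNReal ((1 + max (-1) (min 1 v)) / 2))
    (by
      rw [Real.toNNReal_le_one]
      have h1 : max (-1 : ℝ) (min 1 v) ≤ 1 := max_le (by norm_num) (min_le_left _ _)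
      linarith)

/-- The identification of `Bool` with `{−1,1} ⊆ ℝ`. -/
def boolToR (b : Bool) : ℝ := if b then 1 else -1

open Classical in
/-- `ham x y`: the number of coordinates on which `x` and `y` differ. -/
noncomputable def hamR {w : ℕ} (x y : Fin w → ℝ) : ℕ :=
  (Finset.univ.filter fun i => x i ≠ y i).card

/-!
The Hamming distance `ham(Round v, u)` is the sum of the independent indicators of
`Round(v i) ≠ u i`, and the `i`-th indicator has mean at most `|v i - u i| / 2`, because clipping
`v i` to `[-1, 1]` does not increase its distance to `u i`. So the mean of the sum is at most
`(1 - κ) w / 2`, at least `κ w / 4` below the threshold `(1 - κ/2) w / 2`, and Hoeffding's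
inequality for independent `[0, 1]`-valued variables bounds the tail by
`exp (-2 (κ w / 4)² / w) = exp (-κ² w / 8)`.
-/

open MeasureTheory ProbabilityTheory

lemma pmfPi_apply {β : Type*} : ∀ (k : ℕ) (p : Fin k → PMF β) (x : Fin k → β),
    pmfPi k p x = ∏ i, p i (x i)
  | 0, p, x => by simp [pmfPi, Subsingleton.elim x (fun i => i.elim0)]
  | k + 1, p, x => by
    obtain ⟨a, f, rfl⟩ : ∃ a f, x = Fin.cons a f :=
      ⟨x 0, Fin.tail x, (Fin.cons_self_tail x).symm⟩
    simp only [pmfPi, PMF.bind_apply, PMF.map_apply, pmfPi_apply k]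
    rw [tsum_eq_single a, tsum_eq_single f, if_pos rfl, Fin.prod_univ_succ]
    · simp only [Fin.cons_zero, Fin.cons_succ]
    · exact fun g hg => if_neg fun h => hg (Fin.cons_injective2 h).2.symm
    · exact fun b hb => mul_eq_zero_of_right _
        (ENNReal.tsum_eq_zero.2 fun g => if_neg fun h => hb (Fin.cons_injective2 h).1.symm)

lemma toMeasure_pmfPi {β : Type*} [MeasurableSpace β] [MeasurableSingletonClass β] [Countable β]
    (k : ℕ) (p : Fin k → PMF β) :
    (pmfPi k p).toMeasure = Measure.pi fun i => (p i).toMeasure := by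
  refine Measure.ext_of_singleton fun x => ?_
  rw [PMF.toMeasure_apply_singleton _ _ (measurableSet_singleton x), pmfPi_apply,
    ← Set.univ_pi_singleton, Measure.pi_pi]
  simp only [PMF.toMeasure_apply_singleton _ _ (measurableSet_singleton _)]

lemma measureReal_pi_sum_ge_le {ι : Type*} [Fintype ι] {Ω : ι → Type*}
    [∀ i, MeasurableSpace (Ω i)] (μ : ∀ i, Measure (Ω i)) [∀ i, IsProbabilityMeasure (μ i)]
    {g : ∀ i, Ω i → ℝ} (hg : ∀ i, Measurable (g i)) (hg01 : ∀ i y, g i y ∈ Set.Icc 0 1)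
    {ε : ℝ} (hε : 0 ≤ ε) :
    (Measure.pi μ).real {x | ∑ i, ∫ y, g i y ∂μ i + ε ≤ ∑ i, g i (x i)}
      ≤ Real.exp (-2 * ε ^ 2 / Fintype.card ι) := by
  set X : ∀ i, Ω i → ℝ := fun i y => g i y - ∫ y, g i y ∂μ i
  have hsubG : ∀ i ∈ Finset.univ,
      HasSubgaussianMGF (fun x => X i (x i)) ((‖(1 : ℝ) - 0‖₊ / 2) ^ 2) (Measure.pi μ) := by
    intro i _
    have h : HasSubgaussianMGF (X i) ((‖(1 : ℝ) - 0‖₊ / 2) ^ 2)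
        ((Measure.pi μ).map (Function.eval i)) := by
      rw [(measurePreserving_eval μ i).map_eq]
      exact hasSubgaussianMGF_of_mem_Icc (hg i).aemeasurable (ae_of_all (μ i) (hg01 i))
    exact h.of_map (measurable_pi_apply i).aemeasurable
  have hindep := iIndepFun_pi (μ := μ) (X := X) fun i => ((hg i).sub_const _).aemeasurable
  convert HasSubgaussianMGF.measure_sum_ge_le_of_iIndepFun hindep hsubG hε using 2
  · ext x
    simp only [X, Finset.sum_sub_distrib, Set.mem_ofPred_eq]
    constructor <;> intro h <;> linarith
  · simp only [sub_zero, nnnorm_one, one_div, inv_pow, Finset.sum_const, Finset.card_univ,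
      nsmul_eq_mul, NNReal.coe_mul, NNReal.coe_natCast, NNReal.coe_inv, NNReal.coe_pow,
      NNReal.coe_ofNat]
    ring

lemma toOuterMeasure_pmfPi_sum_ge_le {β : Type*} [MeasurableSpace β] [MeasurableSingletonClass β]
    [Countable β] (k : ℕ) (p : Fin k → PMF β) {g : Fin k → β → ℝ}
    (hg01 : ∀ i b, g i b ∈ Set.Icc 0 1) {ε : ℝ} (hε : 0 ≤ ε) :
    (pmfPi k p).toOuterMeasure {x | ∑ i, ∫ b, g i b ∂(p i).toMeasure + ε ≤ ∑ i, g i (x i)}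
      ≤ ENNReal.ofReal (Real.exp (-2 * ε ^ 2 / k)) := by
  rw [← PMF.toMeasure_apply_eq_toOuterMeasure, toMeasure_pmfPi, ← ofReal_measureReal]
  simpa using ENNReal.ofReal_le_ofReal
    (measureReal_pi_sum_ge_le (fun i => (p i).toMeasure)
      (fun i => measurable_of_countable (g i)) hg01 hε)

lemma roundPMF_true_toReal (v : ℝ) :
    (roundPMF v true).toReal = (1 + max (-1) (min 1 v)) / 2 := by
  have h : 0 ≤ (1 + max (-1) (min 1 v)) / 2 := by linarith [le_max_left (-1 : ℝ) (min 1 v)]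
  show ((Real.toNNReal _ : NNReal) : ℝ≥0∞).toReal = _
  rw [ENNReal.coe_toReal, Real.coe_toNNReal _ h]

lemma roundPMF_false_toReal (v : ℝ) :
    (roundPMF v false).toReal = (1 - max (-1) (min 1 v)) / 2 := by
  have h0 : 0 ≤ (1 + max (-1) (min 1 v)) / 2 := by linarith [le_max_left (-1 : ℝ) (min 1 v)]
  have h1 : (1 + max (-1) (min 1 v)) / 2 ≤ 1 := by
    linarith [max_le (by norm_num : (-1 : ℝ) ≤ 1) (min_le_left 1 v)]
  show (((1 - Real.toNNReal _ : NNReal)) : ℝ≥0∞).toReal = _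
  rw [ENNReal.coe_toReal, NNReal.coe_sub (Real.toNNReal_le_one.2 h1), Real.coe_toNNReal _ h0,
    NNReal.coe_one]
  ring

lemma abs_max_min_sub_le_of_mem_Icc {a b u : ℝ} (v : ℝ) (hu : u ∈ Set.Icc a b) :
    |max a (min b v) - u| ≤ |v - u| := by
  obtain ⟨hu₁, hu₂⟩ := hu
  rcases min_cases b v with ⟨h1, _⟩ | ⟨h1, _⟩ <;>
    rcases max_cases a (min b v) with ⟨h2, _⟩ | ⟨h2, _⟩ <;>
    rw [h2, h1] at * <;>
    rcases abs_cases (v - u) with ⟨h3, _⟩ | ⟨h3, _⟩ <;> rw [abs_le] <;> constructor <;> linarith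

lemma integral_roundPMF_ne_le (v : ℝ) {u : ℝ} (hu : u = 1 ∨ u = -1) :
    ∫ b, (if boolToR b = u then 0 else 1 : ℝ) ∂(roundPMF v).toMeasure ≤ |v - u| / 2 := by
  rw [PMF.integral_eq_sum, Fintype.sum_bool]
  rcases hu with rfl | rfl
  · have := abs_max_min_sub_le_of_mem_Icc (a := -1) (b := 1) v (u := 1) (by norm_num)
    norm_num [boolToR, roundPMF_false_toReal]
    linarith [neg_abs_le (max (-1) (min 1 v) - 1)]
  · have := abs_max_min_sub_le_of_mem_Icc (a := -1) (b := 1) v (u := -1) (by norm_num)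
    norm_num [boolToR, roundPMF_true_toReal] at this ⊢
    linarith [le_abs_self (max (-1) (min 1 v) + 1)]

lemma hamR_eq_sum {w : ℕ} (x y : Fin w → ℝ) :
    (hamR x y : ℝ) = ∑ i, if x i = y i then 0 else 1 := by
  rw [hamR, Finset.natCast_card_filter]
  simp only [ite_not]

theorem round_ham_concentration_general
    (w : ℕ) (κ : ℝ) (hκ0 : 0 < κ)
    (v u : Fin w → ℝ) (hu : ∀ i, u i = 1 ∨ u i = -1)
    (hclose : ∑ i, |v i - u i| ≤ (1 - κ) * w) :
    (pmfPi w fun i => roundPMF (v i)).toOuterMeasure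
        {x : Fin w → Bool |
          (1 / 2 : ℝ) * (1 - κ / 2) * w ≤ (hamR (fun i => boolToR (x i)) u : ℝ)}
      ≤ ENNReal.ofReal (Real.exp (-(κ ^ 2 * w) / 8)) := by
  set g : Fin w → Bool → ℝ := fun i b => if boolToR b = u i then 0 else 1
  set m := ∑ i, ∫ b, g i b ∂(roundPMF (v i)).toMeasure
  have hm : m ≤ (1 - κ) * w / 2 := calc
    m ≤ ∑ i, |v i - u i| / 2 := Finset.sum_le_sum fun i _ => integral_roundPMF_ne_le (v i) (hu i)
    _ ≤ (1 - κ) * w / 2 := by rw [← Finset.sum_div]; linarith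
  set ε := (1 / 2 : ℝ) * (1 - κ / 2) * w - m
  have hε : κ * w / 4 ≤ ε := by simp only [ε]; linarith
  have hκw : 0 ≤ κ * w / 4 := by positivity
  have hg01 : ∀ i b, g i b ∈ Set.Icc 0 1 := fun i b => by
    simp only [g]; split_ifs <;> norm_num
  calc _ = (pmfPi w fun i => roundPMF (v i)).toOuterMeasure {x | m + ε ≤ ∑ i, g i (x i)} := by
        simp only [hamR_eq_sum, g, ε, add_sub_cancel]
    _ ≤ ENNReal.ofReal (Real.exp (-2 * ε ^ 2 / w)) :=
        toOuterMeasure_pmfPi_sum_ge_le w _ hg01 (hκw.trans hε)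
    _ ≤ ENNReal.ofReal (Real.exp (-(κ ^ 2 * w) / 8)) := by
        refine ENNReal.ofReal_le_ofReal (Real.exp_le_exp.2 ?_)
        calc -2 * ε ^ 2 / w ≤ -2 * (κ * w / 4) ^ 2 / w :=
              div_le_div_of_nonneg_right (by nlinarith) (Nat.cast_nonneg w)
          _ = -(κ ^ 2 * w) / 8 := by
              rcases eq_or_ne (w : ℝ) 0 with hw | hw
              · simp [hw]
              · field_simp; ring

/-- For `κ ∈ (0,1]`, `v ∈ ℝ^w` and `u ∈ {−1,1}^w` with
`‖v − u‖₁ ≤ (1−κ)·w`, we have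
`Pr[ham(Round(v), u) ≥ (1/2)·(1 − κ/2)·w] ≤ exp(−κ²·w/8)`, where the coordinates of
`Round(v)` are independent. -/
theorem round_ham_concentration
    (w : ℕ) (hw : 1 ≤ w) (κ : ℝ) (hκ0 : 0 < κ) (hκ1 : κ ≤ 1)
    (v u : Fin w → ℝ) (hu : ∀ i, u i = 1 ∨ u i = -1)
    (hclose : ∑ i, |v i - u i| ≤ (1 - κ) * w) :
    (pmfPi w fun i => roundPMF (v i)).toOuterMeasure
        {x : Fin w → Bool |
          (1 / 2 : ℝ) * (1 - κ / 2) * w ≤ (hamR (fun i => boolToR (x i)) u : ℝ)}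
      ≤ ENNReal.ofReal (Real.exp (-(κ ^ 2 * w) / 8)) :=
  round_ham_concentration_general w κ hκ0 v u hu hclose
end

section
/- Let w ≥ 1 and K ≥ 0 be integers, let t be a natural number, and let C_1,…,C_K be i.i.d. uniform random elements of 𝔽₂^w. Let Z := #{S ⊆ {1,…,K} : wt(Σ_{i∈S} C_i) ≤ t}, where the sum is taken in 𝔽₂^w (the empty sum is the zero vector), and let α := 2^{−w}·Σ_{i=0}^{t} C(w, i). Then E[Z²] = (2^K − 1)·(2^K − 2)·α² + 3·(2^K − 1)·α + 1. -/
open scoped ENNReal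

/-- The Hamming weight of `x ∈ 𝔽₂^w`. -/
def wt {w : ℕ} (x : Fin w → ZMod 2) : ℕ :=
  (Finset.univ.filter fun j => x j ≠ 0).card

/-- `Zcount t C` counts (with multiplicity over messages) the codewords of Hamming weight
at most `t` in the binary linear code with generator rows `C 1, …, C K`:
the number of subsets `S ⊆ {1,…,K}` with `wt(∑_{i∈S} C i) ≤ t`. -/
def Zcount {w K : ℕ} (t : ℕ) (C : Fin K → Fin w → ZMod 2) : ℕ :=
  (Finset.univ.filter fun S : Finset (Fin K) => wt (∑ i ∈ S, C i) ≤ t).card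

namespace SecondMomentAux

open Finset

/-! ### Counting vectors of small Hamming weight -/

lemma card_wt_le (w t : ℕ) :
    (Finset.univ.filter fun x : Fin w → ZMod 2 => wt x ≤ t).card
      = ∑ i ∈ Finset.range (t+1), w.choose i := by
  have h2 : ∀ a : ZMod 2, a ≠ 0 → a = 1 := by decide
  have key : (Finset.univ.filter fun x : Fin w → ZMod 2 => wt x ≤ t).card
      = (Finset.univ.filter fun s : Finset (Fin w) => s.card ≤ t).card := by
    refine Finset.card_bij' (fun x _ => Finset.univ.filter fun j => x j ≠ 0)
      (fun s _ => fun j => if j ∈ s then 1 else 0) ?_ ?_ ?_ ?_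
    · intro x hx
      simp only [mem_filter, mem_univ, true_and] at hx ⊢
      exact hx
    · intro s hs
      simp only [mem_filter, mem_univ, true_and] at hs ⊢
      show wt _ ≤ t
      calc (Finset.univ.filter fun j => (if j ∈ s then (1:ZMod 2) else 0) ≠ 0).card
          = s.card := by
            congr 1; ext j
            by_cases h : j ∈ s <;> simp [h]
        _ ≤ t := hs
    · intro x hx
      funext j
      by_cases h : x j = 0
      · simp [h]
      · simp [h, h2 _ h]
    · intro s hs
      ext j
      by_cases h : j ∈ s <;> simp [h]
  rw [key]
  have hdecomp : (Finset.univ.filter fun s : Finset (Fin w) => s.card ≤ t)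
      = (Finset.range (t+1)).biUnion fun i => Finset.powersetCard i Finset.univ := by
    ext s
    simp [Finset.mem_powersetCard, Nat.lt_succ_iff, eq_comm]
  rw [hdecomp, Finset.card_biUnion]
  · apply Finset.sum_congr rfl
    intro i _
    rw [Finset.card_powersetCard, Finset.card_univ, Fintype.card_fin]
  · intro i _ j _ hij
    apply Finset.disjoint_left.mpr
    intro s hs hs'
    rw [Finset.mem_powersetCard] at hs hs'
    exact hij (hs.2 ▸ hs'.2 ▸ rfl)

lemma wt_zero (w : ℕ) : wt (0 : Fin w → ZMod 2) = 0 := by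
  simp [wt]

lemma add_self_eq_zero' (w : ℕ) : ∀ v : Fin w → ZMod 2, v + v = 0 := by
  intro v; funext j
  have : ∀ a : ZMod 2, a + a = 0 := by decide
  exact this (v j)

/-! ### Splitting sums over product spaces -/

lemma sum_eval_one {ι V : Type*} [Fintype ι] [DecidableEq ι] [Fintype V]
    (i₀ : ι) (F : V → ℝ≥0∞) :
    ∑ C : ι → V, F (C i₀)
      = (∑ x : V, F x) * (Fintype.card ({j : ι // j ≠ i₀} → V)) := by
  rw [← Equiv.sum_comp (Equiv.funSplitAt i₀ V).symm (fun C => F (C i₀))]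
  rw [Fintype.sum_prod_type]
  simp only [Equiv.funSplitAt_symm_apply, dif_pos rfl]
  simp [Finset.sum_const, mul_comm, Finset.sum_mul, card_univ]

lemma card_split {ι V : Type*} [Fintype ι] [DecidableEq ι] [Fintype V] (i₀ : ι) :
    Fintype.card (ι → V)
      = Fintype.card V * Fintype.card ({j : ι // j ≠ i₀} → V) := by
  rw [Fintype.card_congr (Equiv.funSplitAt i₀ V), Fintype.card_prod]

lemma sum_eval_two {ι V : Type*} [Fintype ι] [DecidableEq ι] [Fintype V] [Nonempty V]
    (i₀ j₀ : ι) (hne : j₀ ≠ i₀) (F G : V → ℝ≥0∞) :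
    ∃ m : ℕ, m ≠ 0 ∧
      (∑ C : ι → V, F (C i₀) * G (C j₀)) = (∑ x : V, F x) * (∑ y : V, G y) * m ∧
      Fintype.card (ι → V) = Fintype.card V * (Fintype.card V * m) := by
  classical
  refine ⟨Fintype.card ({k : {j : ι // j ≠ i₀} // k ≠ ⟨j₀, hne⟩} → V), ?_, ?_, ?_⟩
  · exact Fintype.card_ne_zero
  · rw [← Equiv.sum_comp (Equiv.funSplitAt i₀ V).symm
      (fun C => F (C i₀) * G (C j₀))]
    rw [Fintype.sum_prod_type]
    have h1 : ∀ (x : V) (r : {j : ι // j ≠ i₀} → V),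
        (Equiv.funSplitAt i₀ V).symm (x, r) i₀ = x := by intro x r; simp
    have h2 : ∀ (x : V) (r : {j : ι // j ≠ i₀} → V),
        (Equiv.funSplitAt i₀ V).symm (x, r) j₀ = r ⟨j₀, hne⟩ := by
      intro x r; simp [hne]
    simp only [h1, h2]
    simp only [← Finset.mul_sum]
    rw [show (∑ r : {j : ι // j ≠ i₀} → V, G (r ⟨j₀, hne⟩))
        = (∑ y : V, G y) * (Fintype.card ({k : {j : ι // j ≠ i₀} // k ≠ ⟨j₀, hne⟩} → V))
      from sum_eval_one (⟨j₀, hne⟩ : {j : ι // j ≠ i₀}) G]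
    rw [← Finset.sum_mul]
    ring
  · rw [card_split i₀, card_split (⟨j₀, hne⟩ : {j : ι // j ≠ i₀})]

/-! ### The involution trick -/

section
variable {ι V : Type*} [Fintype ι] [DecidableEq ι] [AddCommGroup V]

omit [Fintype ι] in
lemma phi_sum (hchar : ∀ v : V, v + v = 0) (S : Finset ι) {i₀ : ι} (hi : i₀ ∈ S)
    (C : ι → V) :
    (∑ i ∈ S, Function.update C i₀ (∑ i ∈ S, C i) i) = C i₀ := by
  rw [Finset.sum_update_of_mem hi, ← Finset.add_sum_erase S C hi, add_assoc,
    ← Finset.erase_eq, hchar, add_zero]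

omit [Fintype ι] in
lemma phi_invol (hchar : ∀ v : V, v + v = 0) (S : Finset ι) {i₀ : ι} (hi : i₀ ∈ S) :
    Function.Involutive (fun C : ι → V => Function.update C i₀ (∑ i ∈ S, C i)) := by
  intro C
  simp only
  rw [phi_sum hchar S hi C, Function.update_idem, Function.update_eq_self]

lemma sum_comp_phi [Fintype V] (hchar : ∀ v : V, v + v = 0) (S : Finset ι) {i₀ : ι}
    (hi : i₀ ∈ S) (H : (ι → V) → ℝ≥0∞) :
    ∑ C : ι → V, H (Function.update C i₀ (∑ i ∈ S, C i)) = ∑ C : ι → V, H C :=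
  Equiv.sum_comp ((phi_invol hchar S hi).toPerm _) H

lemma sum_single_sub [Fintype V] (hchar : ∀ v : V, v + v = 0) (S : Finset ι) {i₀ : ι}
    (hi : i₀ ∈ S) (F : V → ℝ≥0∞) :
    ∑ C : ι → V, F (∑ i ∈ S, C i) = ∑ C : ι → V, F (C i₀) := by
  rw [← sum_comp_phi hchar S hi (fun C => F (∑ i ∈ S, C i))]
  simp only [phi_sum hchar S hi]

lemma sum_double_sub [Fintype V] (hchar : ∀ v : V, v + v = 0) (S T : Finset ι)
    {i₀ j₀ : ι} (hiS : i₀ ∈ S) (hiT : i₀ ∉ T) (hjT : j₀ ∈ T) (F G : V → ℝ≥0∞) :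
    ∑ C : ι → V, F (∑ i ∈ S, C i) * G (∑ i ∈ T, C i)
      = ∑ C : ι → V, F (C i₀) * G (C j₀) := by
  have hij : i₀ ≠ j₀ := fun h => hiT (h ▸ hjT)
  rw [← sum_comp_phi hchar S hiS (fun C => F (∑ i ∈ S, C i) * G (∑ i ∈ T, C i))]
  simp only [phi_sum hchar S hiS, Finset.sum_update_of_notMem hiT]
  rw [← sum_comp_phi hchar T hjT (fun C => F (C i₀) * G (∑ i ∈ T, C i))]
  simp only [phi_sum hchar T hjT, Function.update_of_ne hij]

end

/-! ### ENNReal cancellations -/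

lemma cancel_one (A : ℝ≥0∞) (cv m : ℕ) (hm : m ≠ 0) :
    ((cv * m : ℕ) : ℝ≥0∞)⁻¹ * (A * m) = A / cv := by
  have hm' : (m:ℝ≥0∞) ≠ 0 := Nat.cast_ne_zero.mpr hm
  have hmt : (m:ℝ≥0∞) ≠ ⊤ := ENNReal.natCast_ne_top m
  rw [Nat.cast_mul, ENNReal.mul_inv (Or.inr hmt) (Or.inr hm'), div_eq_mul_inv]
  calc (↑cv)⁻¹ * (↑m)⁻¹ * (A * ↑m) = (A * (↑cv)⁻¹) * ((↑m)⁻¹ * ↑m) := by ring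
    _ = A * (↑cv)⁻¹ := by rw [ENNReal.inv_mul_cancel hm' hmt, mul_one]

lemma cancel_two (A B : ℝ≥0∞) (cv m : ℕ) (hm : m ≠ 0) :
    ((cv * (cv * m) : ℕ) : ℝ≥0∞)⁻¹ * (A * B * m) = (A / cv) * (B / cv) := by
  have hm' : (m:ℝ≥0∞) ≠ 0 := Nat.cast_ne_zero.mpr hm
  have hmt : (m:ℝ≥0∞) ≠ ⊤ := ENNReal.natCast_ne_top m
  rw [Nat.cast_mul, Nat.cast_mul,
    ENNReal.mul_inv (Or.inr (ENNReal.mul_ne_top (ENNReal.natCast_ne_top cv) hmt))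
      (Or.inl (ENNReal.natCast_ne_top cv)),
    ENNReal.mul_inv (Or.inr hmt) (Or.inr hm'), div_eq_mul_inv, div_eq_mul_inv]
  calc (↑cv)⁻¹ * ((↑cv)⁻¹ * (↑m)⁻¹) * (A * B * ↑m)
      = (A * (↑cv)⁻¹) * (B * (↑cv)⁻¹) * ((↑m)⁻¹ * ↑m) := by ring
    _ = _ := by rw [ENNReal.inv_mul_cancel hm' hmt, mul_one]

/-! ### The indicator of light vectors -/

noncomputable def lightInd (t : ℕ) {w : ℕ} (x : Fin w → ZMod 2) : ℝ≥0∞ :=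
  if wt x ≤ t then 1 else 0

lemma lightInd_zero (t w : ℕ) : lightInd t (0 : Fin w → ZMod 2) = 1 := by
  simp [lightInd, wt_zero]

lemma lightInd_mul_self (t w : ℕ) (x : Fin w → ZMod 2) :
    lightInd t x * lightInd t x = lightInd t x := by
  by_cases h : wt x ≤ t <;> simp [lightInd, h]

lemma sum_lightInd (w t : ℕ) :
    ∑ x : Fin w → ZMod 2, lightInd t x
      = ((∑ i ∈ Finset.range (t+1), w.choose i : ℕ) : ℝ≥0∞) := by
  simp only [lightInd, Finset.sum_boole, card_wt_le]

lemma card_V (w : ℕ) : Fintype.card (Fin w → ZMod 2) = 2 ^ w := by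
  simp [ZMod.card]

lemma Zcount_cast {w K : ℕ} (t : ℕ) (C : Fin K → Fin w → ZMod 2) :
    (Zcount t C : ℝ≥0∞) = ∑ S : Finset (Fin K), lightInd t (∑ i ∈ S, C i) := by
  simp only [Zcount, lightInd, Finset.sum_boole]

/-! ### Evaluation of the basic expectations -/

lemma single_eval (w K t : ℕ) (S : Finset (Fin K)) (hS : S.Nonempty) :
    ((Fintype.card (Fin K → Fin w → ZMod 2) : ℕ) : ℝ≥0∞)⁻¹ *
      ∑ C : Fin K → Fin w → ZMod 2, lightInd t (∑ i ∈ S, C i)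
    = ((∑ i ∈ Finset.range (t+1), w.choose i : ℕ) : ℝ≥0∞)
        / ((Fintype.card (Fin w → ZMod 2) : ℕ) : ℝ≥0∞) := by
  classical
  obtain ⟨i₀, hi⟩ := hS
  rw [sum_single_sub (add_self_eq_zero' w) S hi (lightInd t),
    sum_eval_one i₀ (lightInd t), sum_lightInd,
    card_split (V := Fin w → ZMod 2) i₀]
  exact cancel_one _ _ _ Fintype.card_ne_zero

lemma double_eval (w K t : ℕ) (S T : Finset (Fin K))
    (h : ∃ i₀, i₀ ∈ S ∧ i₀ ∉ T) (hT : T.Nonempty) :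
    ((Fintype.card (Fin K → Fin w → ZMod 2) : ℕ) : ℝ≥0∞)⁻¹ *
      ∑ C : Fin K → Fin w → ZMod 2,
        lightInd t (∑ i ∈ S, C i) * lightInd t (∑ i ∈ T, C i)
    = (((∑ i ∈ Finset.range (t+1), w.choose i : ℕ) : ℝ≥0∞)
        / ((Fintype.card (Fin w → ZMod 2) : ℕ) : ℝ≥0∞)) ^ 2 := by
  classical
  obtain ⟨i₀, hiS, hiT⟩ := h
  obtain ⟨j₀, hjT⟩ := hT
  have hne : j₀ ≠ i₀ := fun h => hiT (h ▸ hjT)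
  rw [sum_double_sub (add_self_eq_zero' w) S T hiS hiT hjT (lightInd t) (lightInd t)]
  obtain ⟨m, hm0, hsum, hcard⟩ :=
    sum_eval_two (V := Fin w → ZMod 2) i₀ j₀ hne (lightInd t) (lightInd t)
  rw [hsum, sum_lightInd, hcard, sq]
  exact cancel_two _ _ _ _ hm0

end SecondMomentAux

open SecondMomentAux Finset

/-- For `C₁, …, C_K` i.i.d. uniform in `𝔽₂^w`,
`E[Z²] = (2^K − 1)·(2^K − 2)·α² + 3·(2^K − 1)·α + 1` where `Z` counts subsets `S` with
`wt(∑_{i∈S} Cᵢ) ≤ t` and `α = 2^{−w}·∑_{i=0}^t C(w,i)`. -/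
theorem second_moment_light_codewords
    (w K t : ℕ) (hw : 1 ≤ w) (α : ℝ≥0∞)
    (hα : α = (∑ i ∈ Finset.range (t + 1), (w.choose i : ℝ≥0∞)) / 2 ^ w) :
    pmfExp (PMF.uniformOfFintype (Fin K → Fin w → ZMod 2))
        (fun C => (Zcount t C : ℝ≥0∞) ^ 2)
      = ((2 : ℝ≥0∞) ^ K - 1) * ((2 : ℝ≥0∞) ^ K - 2) * α ^ 2
        + 3 * ((2 : ℝ≥0∞) ^ K - 1) * α + 1 := by
  classical
  have hN0 : ((Fintype.card (Fin K → Fin w → ZMod 2) : ℕ) : ℝ≥0∞) ≠ 0 :=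
    Nat.cast_ne_zero.mpr Fintype.card_ne_zero
  have hNt : ((Fintype.card (Fin K → Fin w → ZMod 2) : ℕ) : ℝ≥0∞) ≠ ⊤ :=
    ENNReal.natCast_ne_top _
  -- relate α to the cast form used in the auxiliary lemmas
  have hαA : α = ((∑ i ∈ Finset.range (t+1), w.choose i : ℕ) : ℝ≥0∞)
      / ((Fintype.card (Fin w → ZMod 2) : ℕ) : ℝ≥0∞) := by
    rw [hα, card_V]
    push_cast
    rfl
  -- the elementary expectation values
  set E : Finset (Fin K) → Finset (Fin K) → ℝ≥0∞ := fun S T =>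
    ((Fintype.card (Fin K → Fin w → ZMod 2) : ℕ) : ℝ≥0∞)⁻¹ *
      ∑ C : Fin K → Fin w → ZMod 2,
        lightInd t (∑ i ∈ S, C i) * lightInd t (∑ i ∈ T, C i) with hE
  have hE00 : E ∅ ∅ = 1 := by
    simp only [hE]
    simp only [Finset.sum_empty, lightInd_zero, mul_one]
    rw [Finset.sum_const, Finset.card_univ, nsmul_eq_mul, mul_one]
    exact ENNReal.inv_mul_cancel hN0 hNt
  have hE0T : ∀ T : Finset (Fin K), T ≠ ∅ → E ∅ T = α := by
    intro T hT
    simp only [hE]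
    simp only [Finset.sum_empty, lightInd_zero, one_mul]
    rw [single_eval w K t T (nonempty_iff_ne_empty.mpr hT), hαA]
  have hES0 : ∀ S : Finset (Fin K), S ≠ ∅ → E S ∅ = α := by
    intro S hS
    simp only [hE]
    simp only [Finset.sum_empty, lightInd_zero, mul_one]
    rw [single_eval w K t S (nonempty_iff_ne_empty.mpr hS), hαA]
  have hESS : ∀ S : Finset (Fin K), S ≠ ∅ → E S S = α := by
    intro S hS
    simp only [hE]
    simp only [lightInd_mul_self]
    rw [single_eval w K t S (nonempty_iff_ne_empty.mpr hS), hαA]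
  have hEST : ∀ S T : Finset (Fin K), S ≠ ∅ → T ≠ ∅ → S ≠ T → E S T = α ^ 2 := by
    intro S T hS hT hST
    have hSn := nonempty_iff_ne_empty.mpr hS
    have hTn := nonempty_iff_ne_empty.mpr hT
    by_cases hsub : ∃ i₀, i₀ ∈ S ∧ i₀ ∉ T
    · simp only [hE]
      rw [double_eval w K t S T hsub hTn, hαA]
    · push_neg at hsub
      have hsub' : ∃ i₀, i₀ ∈ T ∧ i₀ ∉ S := by
        by_contra hc
        push_neg at hc
        exact hST (Finset.Subset.antisymm hsub hc)
      simp only [hE]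
      rw [show (∑ C : Fin K → Fin w → ZMod 2,
            lightInd t (∑ i ∈ S, C i) * lightInd t (∑ i ∈ T, C i))
          = ∑ C : Fin K → Fin w → ZMod 2,
            lightInd t (∑ i ∈ T, C i) * lightInd t (∑ i ∈ S, C i) from
        Finset.sum_congr rfl fun C _ => mul_comm _ _]
      rw [double_eval w K t T S hsub' hSn, hαA]
  -- reduce the expectation to a double sum
  have hexp : pmfExp (PMF.uniformOfFintype (Fin K → Fin w → ZMod 2))
        (fun C => (Zcount t C : ℝ≥0∞) ^ 2)
      = ∑ S : Finset (Fin K), ∑ T : Finset (Fin K), E S T := by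
    unfold pmfExp
    rw [tsum_fintype]
    simp only [PMF.uniformOfFintype_apply]
    have : ∀ C : Fin K → Fin w → ZMod 2, (Zcount t C : ℝ≥0∞) ^ 2
        = ∑ S : Finset (Fin K), ∑ T : Finset (Fin K),
            lightInd t (∑ i ∈ S, C i) * lightInd t (∑ i ∈ T, C i) := by
      intro C
      rw [sq, Zcount_cast, Finset.sum_mul_sum]
    simp only [this]
    rw [← Finset.mul_sum, Finset.sum_comm]
    rw [show ∑ S : Finset (Fin K), ∑ C : Fin K → Fin w → ZMod 2,
        ∑ T : Finset (Fin K), lightInd t (∑ i ∈ S, C i) * lightInd t (∑ i ∈ T, C i)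
      = ∑ S : Finset (Fin K), ∑ T : Finset (Fin K), ∑ C : Fin K → Fin w → ZMod 2,
        lightInd t (∑ i ∈ S, C i) * lightInd t (∑ i ∈ T, C i) from
      Finset.sum_congr rfl fun S _ => Finset.sum_comm]
    rw [Finset.mul_sum]
    exact Finset.sum_congr rfl fun S _ => by rw [Finset.mul_sum]
  rw [hexp]
  -- evaluate the double sum
  have hcard1 : ((Finset.univ.erase (∅ : Finset (Fin K))).card) = 2 ^ K - 1 := by
    rw [Finset.card_erase_of_mem (mem_univ _), Finset.card_univ, Fintype.card_finset,
      Fintype.card_fin]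
  rw [← Finset.add_sum_erase Finset.univ (fun S => ∑ T : Finset (Fin K), E S T)
    (mem_univ (∅ : Finset (Fin K)))]
  have hrow0 : ∑ T : Finset (Fin K), E ∅ T = 1 + (2^K - 1 : ℕ) * α := by
    rw [← Finset.add_sum_erase Finset.univ (E ∅) (mem_univ (∅ : Finset (Fin K))), hE00]
    congr 1
    rw [Finset.sum_congr rfl fun T hT => hE0T T (Finset.mem_erase.mp hT).1,
      Finset.sum_const, hcard1, nsmul_eq_mul]
  have hrow : ∀ S ∈ Finset.univ.erase (∅ : Finset (Fin K)),
      ∑ T : Finset (Fin K), E S T = α + (α + (2^K - 1 - 1 : ℕ) * α ^ 2) := by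
    intro S hS
    have hSne : S ≠ ∅ := (Finset.mem_erase.mp hS).1
    rw [← Finset.add_sum_erase Finset.univ (E S) (mem_univ (∅ : Finset (Fin K))),
      hES0 S hSne]
    congr 1
    rw [← Finset.add_sum_erase _ (E S) hS, hESS S hSne]
    congr 1
    rw [Finset.sum_congr rfl fun T hT => by
        have h1 := Finset.mem_erase.mp hT
        have h2 := Finset.mem_erase.mp h1.2
        exact hEST S T hSne h2.1 (Ne.symm h1.1),
      Finset.sum_const, Finset.card_erase_of_mem hS, hcard1, nsmul_eq_mul]
  rw [hrow0, Finset.sum_congr rfl hrow, Finset.sum_const, Finset.card_erase_of_mem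
    (mem_univ _), Finset.card_univ, Fintype.card_finset, Fintype.card_fin, nsmul_eq_mul]
  -- final arithmetic
  have hc1 : ((2^K - 1 : ℕ) : ℝ≥0∞) = (2:ℝ≥0∞)^K - 1 := by
    rw [ENNReal.natCast_sub]
    push_cast
    rfl
  have hc2 : ((2^K - 1 - 1 : ℕ) : ℝ≥0∞) = (2:ℝ≥0∞)^K - 2 := by
    rw [ENNReal.natCast_sub, ENNReal.natCast_sub, tsub_tsub]
    push_cast
    norm_num
  rw [hc1, hc2]
  set c := (2:ℝ≥0∞)^K - 1
  set d := (2:ℝ≥0∞)^K - 2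
  ring
end
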